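/- arXiv:1811.05734 — 7 statements merged into one kernel-verified Lean document; each statement's English description precedes it below -/
import Mathlib

section
/- Let G be a tournament with t vertices. Then there exists a linear ordering π of the vertices of G such that the spanning subgraph R_π(G), consisting of exactly those edges (i,j) of G for which i appears before j in the ordering π, contains no transitive subtournament on ⌊√(2t)⌋ + 1 vertices. -/
/-!
Build the ordering greedily. As long as the current vertex set `U` still contains a transitive
subtournament `W` on `s + 2` vertices, put `W` first, in the reverse of its transitive order, so
that no edge inside `W` goes forward; a transitive subtournament of `R_π` then meets `W` in at
most one vertex. Since `(s + 1)(s + 2) / 2 = 1 + 2 + ⋯ + (s + 1)`, removing `W` lets `s` drop by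
one, and once no such `W` is left any ordering of the rest works. With `s = ⌊√(2t)⌋` we have
`2t < (s + 1)(s + 2)`, so every transitive subtournament of `R_π` has at most `s` vertices.
-/

/-- `E` is (the edge relation of) a tournament: it is irreflexive, and for each pair of
distinct vertices exactly one of the two directed edges is present. -/
def IsTournament {V : Type*} (E : V → V → Prop) : Prop :=
  (∀ v, ¬ E v v) ∧ (∀ u v : V, u ≠ v → (E u v ↔ ¬ E v u))

/-- A directed-edge relation is acyclic if there is no directed cycle. -/
def IsAcyclicRel {V : Type*} (E : V → V → Prop) : Prop :=
  ∀ v, ¬ Relation.TransGen E v v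

/-- `S` spans a transitive subtournament of `R_g(E)`: acyclicity is automatic, since every edge
of `R_g(E)` increases `g`. -/
def IsForwardClique {V α : Type*} [LT α] (E : V → V → Prop) (g : V → α) (S : Finset V) :
    Prop :=
  ∀ u ∈ S, ∀ v ∈ S, u ≠ v → (E u v ∧ g u < g v) ∨ (E v u ∧ g v < g u)

theorem isForwardClique_congr {V α β : Type*} [LT α] [LT β] {E : V → V → Prop} {g : V → α}
    {g' : V → β} {S : Finset V} (h : ∀ u ∈ S, ∀ v ∈ S, g u < g v ↔ g' u < g' v) :
    IsForwardClique E g S ↔ IsForwardClique E g' S :=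
  forall₂_congr fun u hu => forall₂_congr fun v hv => by rw [h u hu v hv, h v hv u hu]

namespace IsForwardClique

variable {V α : Type*} {E : V → V → Prop} {g : V → α} {S T : Finset V}

theorem mono [LT α] (h : IsForwardClique E g S) (hTS : T ⊆ S) : IsForwardClique E g T :=
  fun u hu v hv huv => h u (hTS hu) v (hTS hv) huv

theorem injOn [Preorder α] (h : IsForwardClique E g S) : Set.InjOn g S := by
  intro u hu v hv huv
  by_contra hne
  rcases h u hu v hv hne with ⟨-, hlt⟩ | ⟨-, hlt⟩ <;> simp [huv] at hlt

theorem lt_of_edge [Preorder α] (hE : ∀ u v, E u v → ¬E v u) (h : IsForwardClique E g S)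
    {u v : V} (hu : u ∈ S) (hv : v ∈ S) (huv : E u v) : g u < g v := by
  have hne : u ≠ v := by rintro rfl; exact hE u u huv huv
  rcases h u hu v hv hne with ⟨-, hlt⟩ | ⟨hvu, -⟩
  · exact hlt
  · exact absurd hvu (hE u v huv)

theorem card_le_one_of_reverses [Preorder α] (h : IsForwardClique E g S)
    (hrev : ∀ u ∈ S, ∀ v ∈ S, E u v → g v < g u) : S.card ≤ 1 := by
  refine Finset.card_le_one.mpr fun u hu v hv => by_contra fun hne => ?_
  rcases h u hu v hv hne with ⟨huv, hlt⟩ | ⟨hvu, hlt⟩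
  · exact lt_asymm hlt (hrev u hu v hv huv)
  · exact lt_asymm hlt (hrev v hv u hu hvu)

end IsForwardClique

def IsCliqueBoundedRanking {V : Type*} (E : V → V → Prop) (U : Finset V) (s : ℕ) (g : V → ℕ) :
    Prop :=
  Set.InjOn g U ∧ ∀ S ⊆ U, IsForwardClique E g S → S.card ≤ s

section Ranking

variable {V : Type*} {E : V → V → Prop}

theorem exists_cliqueBoundedRanking_union [DecidableEq V] (hE : ∀ u v, E u v → ¬E v u)
    {W U : Finset V} (hWU : Disjoint W U) {f : V → ℕ} (hW : IsForwardClique E f W) {s : ℕ}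
    {g : V → ℕ} (hg : IsCliqueBoundedRanking E U s g) :
    ∃ g' : V → ℕ, IsCliqueBoundedRanking E (W ∪ U) (s + 1) g' := by
  set M := W.sup f
  have hfM : ∀ v ∈ W, f v ≤ M := fun v hv => Finset.le_sup hv
  let g' : V → ℕ := fun v => if v ∈ W then M - f v else M + 1 + g v
  have hg'W : ∀ v ∈ W, g' v = M - f v := fun v hv => if_pos hv
  have hg'U : ∀ v ∈ U, g' v = M + 1 + g v :=
    fun v hv => if_neg (Finset.disjoint_right.mp hWU hv)
  refine ⟨g', ?_, fun S hS hclique => ?_⟩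
  · rw [Finset.coe_union, Set.injOn_union (Finset.disjoint_coe.mpr hWU)]
    refine ⟨fun u hu v hv huv => hW.injOn hu hv ?_, fun u hu v hv huv => hg.1 hu hv ?_,
      fun u hu v hv => ?_⟩
    · rw [hg'W u hu, hg'W v hv] at huv
      have := hfM u hu
      have := hfM v hv
      omega
    · rw [hg'U u hu, hg'U v hv] at huv
      omega
    · rw [hg'W u hu, hg'U v hv]
      omega
  · have hSW : (S ∩ W).card ≤ 1 := by
      refine (hclique.mono Finset.inter_subset_left).card_le_one_of_reverses
        fun u hu v hv huv => ?_
      have hu := Finset.mem_of_mem_inter_right hu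
      have hv := Finset.mem_of_mem_inter_right hv
      have := hW.lt_of_edge hE hu hv huv
      have := hfM v hv
      rw [hg'W u hu, hg'W v hv]
      omega
    have hSU : (S \ W).card ≤ s := by
      have hsub : S \ W ⊆ U := sdiff_le_iff.mpr hS
      refine hg.2 _ hsub ((isForwardClique_congr fun u hu v hv => ?_).mp
        (hclique.mono Finset.sdiff_subset))
      rw [hg'U u (hsub hu), hg'U v (hsub hv)]
      omega
    have := Finset.card_inter_add_card_sdiff S W
    omega

theorem exists_cliqueBoundedRanking [Fintype V] (hE : ∀ u v, E u v → ¬E v u) (s : ℕ) :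
    ∀ U : Finset V, 2 * U.card < (s + 1) * (s + 2) → ∃ g, IsCliqueBoundedRanking E U s g := by
  classical
  have hinj : Function.Injective fun v => (Fintype.equivFin V v : ℕ) :=
    Fin.val_injective.comp (Fintype.equivFin V).injective
  induction s with
  | zero =>
    intro U hU
    refine ⟨_, hinj.injOn, fun S hSU _ => ?_⟩
    have := Finset.card_le_card hSU
    omega
  | succ s ih =>
    intro U hU
    by_cases hbig : ∃ W ⊆ U, s + 2 ≤ W.card ∧ ∃ f : V → ℕ, IsForwardClique E f W
    · obtain ⟨W, hWU, hWcard, f, hW⟩ := hbig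
      have hrest : 2 * (U \ W).card < (s + 1) * (s + 2) := by
        have hWU' := Finset.card_le_card hWU
        have hsq : (s + 1 + 1) * (s + 1 + 2) = (s + 1) * (s + 2) + 2 * (s + 2) := by ring
        rw [Finset.card_sdiff_of_subset hWU]
        omega
      obtain ⟨g, hg⟩ := ih (U \ W) hrest
      rw [← Finset.union_sdiff_of_subset hWU]
      exact exists_cliqueBoundedRanking_union hE disjoint_sdiff_self_right hW hg
    · push Not at hbig
      refine ⟨_, hinj.injOn, fun S hSU hS => ?_⟩
      by_contra hcard
      exact hbig S hSU (by omega) _ hS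

end Ranking

theorem exists_equiv_fin_lt_iff {V α : Type*} [Fintype V] [LinearOrder α] {g : V → α}
    (hg : Function.Injective g) :
    ∃ π : V ≃ Fin (Fintype.card V), ∀ u v, π u < π v ↔ g u < g v :=
  let _ : LinearOrder V := LinearOrder.lift' g hg
  ⟨(monoEquivOfFin V rfl).symm.toEquiv, fun _ _ => (monoEquivOfFin V rfl).symm.lt_iff_lt⟩

theorem IsTournament.asymm {V : Type*} {E : V → V → Prop} (hT : IsTournament E) (u v : V)
    (huv : E u v) : ¬E v u := by
  have hne : u ≠ v := by rintro rfl; exact hT.1 u huv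
  exact (hT.2 u v hne).mp huv

/-- For every tournament `G` on `t` vertices there is a linear ordering `π` of the
vertices (an equivalence with `Fin t`) such that `R_π(G)`, the spanning subgraph
consisting of the edges of `G` going forward in `π`, contains no transitive
subtournament on `⌊√(2t)⌋ + 1` vertices, i.e. no set `S` of that many vertices such
that every pair of distinct vertices of `S` is joined by an edge of `R_π(G)` and the
edges of `R_π(G)` inside `S` form no directed cycle. -/
theorem stmt1 (V : Type) [Fintype V] (E : V → V → Prop) (hT : IsTournament E) :
    ∃ π : V ≃ Fin (Fintype.card V),
      ¬ ∃ S : Finset V,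
        S.card = Nat.sqrt (2 * Fintype.card V) + 1 ∧
        (∀ u ∈ S, ∀ v ∈ S, u ≠ v →
          (E u v ∧ π u < π v) ∨ (E v u ∧ π v < π u)) ∧
        IsAcyclicRel (fun u v => u ∈ S ∧ v ∈ S ∧ E u v ∧ π u < π v) := by
  set s := Nat.sqrt (2 * Fintype.card V)
  have hcard : 2 * (Finset.univ : Finset V).card < (s + 1) * (s + 2) := by
    have := Nat.lt_succ_sqrt (2 * Fintype.card V)
    rw [Finset.card_univ]
    nlinarith
  obtain ⟨g, hinj, hbound⟩ := exists_cliqueBoundedRanking hT.asymm s Finset.univ hcard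
  obtain ⟨π, hπ⟩ := exists_equiv_fin_lt_iff (Set.injOn_univ.mp (by simpa using hinj))
  refine ⟨π, fun ⟨S, hS, hclique, _⟩ => ?_⟩
  have := hbound S S.subset_univ ((isForwardClique_congr fun u _ v _ => hπ u v).mp hclique)
  omega
end

section
/- Every tournament G with t ≥ 2 vertices has an edge that is contained in at most (t+1)/4 cyclic triangles of G. -/
open Finset in
/-- Every tournament with `t ≥ 2` vertices has an edge `(u,v)` that is contained in at
most `(t+1)/4` cyclic triangles, i.e. the number of vertices `w` such that `u→v→w→u` is
a directed 3-cycle is at most `(t+1)/4`. -/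
theorem stmt2 (V : Type) [Fintype V] (E : V → V → Prop) (hT : IsTournament E)
    (ht : 2 ≤ Fintype.card V) :
    ∃ u v : V, E u v ∧
      (Nat.card {w : V // E v w ∧ E w u} : ℝ) ≤ ((Fintype.card V : ℝ) + 1) / 4 := by
  classical
  obtain ⟨hirr, hasym⟩ := hT
  set t : ℝ := (Fintype.card V : ℝ) with htdef
  set ι : V → V → ℝ := fun u v => if E u v then 1 else 0 with hιdef
  have hι0 : ∀ v, ι v v = 0 := fun v => by simp [hιdef, hirr v]
  have hι1 : ∀ u v : V, u ≠ v → ι u v + ι v u = 1 := by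
    intro u v h
    by_cases he : E u v
    · simp [hιdef, he, (hasym u v h).1 he]
    · have hvu : E v u := by
        by_contra hvu
        exact he ((hasym u v h).2 hvu)
      simp [hιdef, he, hvu]
  have hprod : ∀ u v : V, ι u v * ι v u = 0 := by
    intro u v
    by_cases h : u = v
    · subst h; simp [hι0]
    · by_cases he : E u v
      · have : ¬ E v u := (hasym u v h).1 he
        simp [hιdef, this]
      · simp [hιdef, he]
  have hsq : ∀ u v : V, ι u v * ι u v = ι u v := by
    intro u v; by_cases he : E u v <;> simp [hιdef, he]
  set d : V → ℝ := fun u => ∑ v, ι u v with hddef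
  set di : V → ℝ := fun u => ∑ v, ι v u with hdidef
  -- out-degree plus in-degree is t - 1
  have hdd : ∀ u : V, d u + di u = t - 1 := by
    intro u
    have h1 : d u + di u = ∑ v, (ι u v + ι v u) := by
      rw [hddef, hdidef, Finset.sum_add_distrib]
    have h2 : ∀ v : V, ι u v + ι v u = 1 - (if v = u then 1 else 0) := by
      intro v
      by_cases h : v = u
      · subst h; simp [hι0]
      · rw [if_neg h, add_comm]; rw [hι1 v u h]; ring
    rw [h1, Finset.sum_congr rfl (fun v _ => h2 v), Finset.sum_sub_distrib,
      Finset.sum_const, Finset.card_univ, Finset.sum_ite_eq' Finset.univ u (fun _ => (1:ℝ))]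
    simp [htdef]
  have hsum_comm : ∑ u, d u = ∑ u, di u := Finset.sum_comm
  have hsumd : (∑ u, d u) * 2 = t * (t - 1) := by
    have h1 : ∑ u : V, (d u + di u) = ∑ u : V, (t - 1) :=
      Finset.sum_congr rfl fun u _ => hdd u
    rw [Finset.sum_add_distrib, ← hsum_comm, Finset.sum_const, Finset.card_univ,
      nsmul_eq_mul, ← htdef] at h1
    linarith
  set A : ℝ := ∑ u, ∑ v, ∑ w, ι u v * ι v w * ι w u with hAdef
  set B : ℝ := ∑ u, ∑ v, ∑ w, ι u v * ι v w * ι u w with hBdef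
  -- A + B = ∑ v, di v * d v
  have hterm : ∀ u v w : V, ι u v * ι v w * ι w u + ι u v * ι v w * ι u w = ι u v * ι v w := by
    intro u v w
    by_cases h : w = u
    · subst h
      linear_combination (2 * ι w w - 1) * hprod w v
    · linear_combination (ι u v * ι v w) * hι1 w u h
  have hAB : A + B = ∑ v, di v * d v := by
    have h1 : A + B = ∑ u, ∑ v, ∑ w, (ι u v * ι v w * ι w u + ι u v * ι v w * ι u w) := by
      rw [hAdef, hBdef, ← Finset.sum_add_distrib]
      refine Finset.sum_congr rfl fun u _ => ?_
      rw [← Finset.sum_add_distrib]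
      refine Finset.sum_congr rfl fun v _ => ?_
      rw [← Finset.sum_add_distrib]
    rw [h1]
    have h2 : ∀ u v : V, ∑ w, (ι u v * ι v w * ι w u + ι u v * ι v w * ι u w)
        = ι u v * d v := by
      intro u v
      rw [Finset.sum_congr rfl (fun w _ => hterm u v w), hddef, Finset.mul_sum]
    calc ∑ u, ∑ v, ∑ w, (ι u v * ι v w * ι w u + ι u v * ι v w * ι u w)
        = ∑ u, ∑ v, ι u v * d v := by
          exact Finset.sum_congr rfl fun u _ => Finset.sum_congr rfl fun v _ => h2 u v
      _ = ∑ v, ∑ u, ι u v * d v := Finset.sum_comm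
      _ = ∑ v, di v * d v := by
          refine Finset.sum_congr rfl fun v _ => ?_
          rw [hdidef, Finset.sum_mul]
  -- 2B = ∑ u, (d u * d u - d u)
  have hterm2 : ∀ u v w : V, ι u v * ι u w * (ι v w + ι w v)
      = ι u v * ι u w - (if v = w then ι u v else 0) := by
    intro u v w
    by_cases h : v = w
    · subst h
      rw [if_pos rfl]
      linear_combination (2 * ι u v * ι u v) * hι0 v - hsq u v
    · rw [if_neg h, hι1 v w h, mul_one, sub_zero]
  have h2B : B + B = ∑ u, (d u * d u - d u) := by
    have hswap : ∀ F : V → V → ℝ, (∑ v, ∑ w, F v w) = ∑ v, ∑ w, F w v :=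
      fun F => Finset.sum_comm
    have h1 : ∀ u : V, (∑ v, ∑ w, ι u v * ι v w * ι u w) + (∑ v, ∑ w, ι u v * ι v w * ι u w)
        = d u * d u - d u := by
      intro u
      have e1 : (∑ v, ∑ w, ι u v * ι v w * ι u w) + (∑ v, ∑ w, ι u v * ι v w * ι u w)
          = (∑ v, ∑ w, ι u v * ι v w * ι u w) + (∑ v, ∑ w, ι u w * ι w v * ι u v) := by
        congr 1
        exact Finset.sum_comm
      rw [e1]
      have e2 : (∑ v, ∑ w, ι u v * ι v w * ι u w) + (∑ v, ∑ w, ι u w * ι w v * ι u v)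
          = ∑ v, ∑ w, (ι u v * ι u w * (ι v w + ι w v)) := by
        rw [← Finset.sum_add_distrib]
        refine Finset.sum_congr rfl fun v _ => ?_
        rw [← Finset.sum_add_distrib]
        refine Finset.sum_congr rfl fun w _ => ?_
        ring
      rw [e2, Finset.sum_congr rfl (fun v (_ : v ∈ Finset.univ) =>
        Finset.sum_congr rfl fun w _ => hterm2 u v w)]
      have e3 : ∑ v : V, ∑ w : V, (ι u v * ι u w - (if v = w then ι u v else 0))
          = (∑ v : V, ∑ w : V, ι u v * ι u w) - ∑ v : V, ι u v := by
        rw [← Finset.sum_sub_distrib]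
        refine Finset.sum_congr rfl fun v _ => ?_
        rw [Finset.sum_sub_distrib]
        congr 1
        simp
      rw [e3]
      have e4 : (∑ v : V, ∑ w : V, ι u v * ι u w) = d u * d u := by
        rw [hddef, Finset.sum_mul_sum]
      rw [e4, hddef]
    rw [hBdef, ← Finset.sum_add_distrib]
    exact Finset.sum_congr rfl fun u _ => h1 u
  -- pointwise concavity bound
  have hpoint : ∀ v : V, 2 * (di v * d v) - (d v * d v - d v)
      ≤ (t + 1) / 2 * d v - (3 * (t - 1) / 2) * (d v - (t - 1) / 2) := by
    intro v
    have hdv : di v = t - 1 - d v := by linarith [hdd v]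
    rw [hdv]
    nlinarith [sq_nonneg (d v - (t - 1) / 2)]
  have hAbound : 2 * A ≤ (t + 1) / 2 * (∑ u, d u) := by
    have h1 : 2 * A = ∑ v, (2 * (di v * d v) - (d v * d v - d v)) := by
      rw [Finset.sum_sub_distrib, ← Finset.mul_sum, ← hAB, ← h2B]
      ring
    have h2 : ∑ v, (2 * (di v * d v) - (d v * d v - d v))
        ≤ ∑ v, ((t + 1) / 2 * d v - (3 * (t - 1) / 2) * (d v - (t - 1) / 2)) :=
      Finset.sum_le_sum fun v _ => hpoint v
    have h3 : ∑ v, ((t + 1) / 2 * d v - (3 * (t - 1) / 2) * (d v - (t - 1) / 2))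
        = (t + 1) / 2 * (∑ u, d u)
          - (3 * (t - 1) / 2) * ((∑ u, d u) - t * (t - 1) / 2) := by
      rw [Finset.sum_sub_distrib, ← Finset.mul_sum, ← Finset.mul_sum,
        Finset.sum_sub_distrib, Finset.sum_const, Finset.card_univ, nsmul_eq_mul, ← htdef]
      ring
    rw [h1]
    calc ∑ v, (2 * (di v * d v) - (d v * d v - d v))
        ≤ (t + 1) / 2 * (∑ u, d u)
          - (3 * (t - 1) / 2) * ((∑ u, d u) - t * (t - 1) / 2) := h3 ▸ h2
      _ = (t + 1) / 2 * (∑ u, d u) := by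
          have : (∑ u, d u) - t * (t - 1) / 2 = 0 := by linarith
          rw [this, mul_zero, sub_zero]
  -- the edge set and the triangle-count function
  set s : Finset (V × V) := Finset.univ.filter (fun p : V × V => E p.1 p.2) with hsdef
  set F : V × V → ℝ := fun p => ∑ w, ι p.2 w * ι w p.1 with hFdef
  have hFA : ∑ p ∈ s, F p = A := by
    rw [hsdef, Finset.sum_filter]
    have h1 : ∀ p : V × V, (if E p.1 p.2 then F p else 0) = ι p.1 p.2 * F p := by
      intro p
      by_cases he : E p.1 p.2 <;> simp [hιdef, he]
    rw [Finset.sum_congr rfl (fun p _ => h1 p), Fintype.sum_prod_type, hAdef]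
    refine Finset.sum_congr rfl fun u _ => Finset.sum_congr rfl fun v _ => ?_
    rw [hFdef, Finset.mul_sum]
    exact Finset.sum_congr rfl fun w _ => by ring
  have hcard : (s.card : ℝ) = ∑ u, d u := by
    have h1 : (s.card : ℝ) = ∑ p ∈ s, (1 : ℝ) := by
      rw [Finset.sum_const, nsmul_eq_mul, mul_one]
    rw [h1, hsdef, Finset.sum_filter, Fintype.sum_prod_type]
  -- s is nonempty
  have hne : s.Nonempty := by
    obtain ⟨a, b, hab⟩ := Fintype.exists_pair_of_one_lt_card (α := V) (by omega)
    by_cases he : E a b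
    · exact ⟨(a, b), by simp [hsdef, he]⟩
    · have : E b a := by
        by_contra hba
        exact he ((hasym a b hab).2 hba)
      exact ⟨(b, a), by simp [hsdef, this]⟩
  -- pigeonhole
  have hsum_le : ∑ p ∈ s, F p ≤ ∑ p ∈ s, (t + 1) / 4 := by
    rw [hFA, Finset.sum_const, nsmul_eq_mul, hcard]
    linarith [hAbound]
  obtain ⟨p, hp, hple⟩ := Finset.exists_le_of_sum_le hne hsum_le
  have hpe : E p.1 p.2 := by
    rw [hsdef] at hp
    exact (Finset.mem_filter.mp hp).2
  refine ⟨p.1, p.2, hpe, ?_⟩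
  have hcount : (Nat.card {w : V // E p.2 w ∧ E w p.1} : ℝ) = F p := by
    rw [Nat.card_eq_fintype_card, Fintype.card_subtype, hFdef]
    rw [Finset.card_filter]
    push_cast
    refine Finset.sum_congr rfl fun w _ => ?_
    by_cases h1 : E p.2 w <;> by_cases h2 : E w p.1 <;> simp [hιdef, h1, h2]
  rw [hcount]
  exact hple
end

section
/- For every positive integer n, let G_n be the tournament on vertex set {1,…,n} × {1,…,n} in which ((i,j),(k,ℓ)) is an edge if and only if (i < k and j ≠ ℓ) or (i > k and j = ℓ) or (i = k and j < ℓ). Then every acyclic subgraph of G_n has underlying chromatic number at most 3·n^{7/4}. -/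
/-- The tournament `G_n` on vertex set `{1,…,n} × {1,…,n}` (modelled as
`Fin n × Fin n`) in which `((i,j),(k,ℓ))` is an edge iff
`(i < k ∧ j ≠ ℓ) ∨ (i > k ∧ j = ℓ) ∨ (i = k ∧ j < ℓ)`. -/
def Gtour (n : ℕ) : Fin n × Fin n → Fin n × Fin n → Prop :=
  fun p q =>
    (p.1 < q.1 ∧ p.2 ≠ q.2) ∨ (q.1 < p.1 ∧ p.2 = q.2) ∨ (p.1 = q.1 ∧ p.2 < q.2)

open Finset

theorem IsAcyclicRel.exists_injective_lt {V : Type*} [Fintype V] {E : V → V → Prop}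
    (hE : IsAcyclicRel E) : ∃ t : V → ℕ ×ₗ ℕ, Function.Injective t ∧ ∀ u v, E u v → t u < t v := by
  classical
  refine ⟨fun v => toLex (#{u | Relation.TransGen E u v}, Fintype.equivFin V v),
    fun u v huv => ?_, fun u v huv => Prod.Lex.toLex_lt_toLex.2 (Or.inl (card_lt_card ?_))⟩
  · simpa [Fin.val_inj] using congrArg (fun p => (ofLex p).2) huv
  · refine (ssubset_iff_of_subset fun w hw => ?_).2 ⟨u, ?_, ?_⟩ <;> simp only [mem_filter_univ] at *
    · exact hw.tail huv
    · exact .single huv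
    · exact hE u

namespace SimpleGraph

variable {V : Type*} {G : SimpleGraph V} {m s : ℕ}

theorem exists_isIndepSet_cover [DecidableEq V] (hs : 0 < s)
    (h : ∀ U : Finset V, m < #U → ∃ S ⊆ U, #S = s ∧ G.IsIndepSet (S : Set V)) (U : Finset V) :
    ∃ F : Finset (Finset V), (∀ S ∈ F, G.IsIndepSet (S : Set V)) ∧ (∀ v ∈ U, ∃ S ∈ F, v ∈ S) ∧
      #F ≤ m + #U / s := by
  induction U using Finset.strongInduction with
  | H U ih =>
  by_cases hU : m < #U
  · obtain ⟨S, hSU, hS, hSind⟩ := h U hU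
    obtain ⟨F, hF, hcov, hcard⟩ := ih (U \ S) (sdiff_ssubset hSU (card_pos.1 (hS ▸ hs)))
    refine ⟨insert S F, forall_mem_insert _ _ _ |>.2 ⟨hSind, hF⟩, fun v hv => ?_, ?_⟩
    · by_cases hvS : v ∈ S
      · exact ⟨S, mem_insert_self _ _, hvS⟩
      · obtain ⟨T, hT, hvT⟩ := hcov v (mem_sdiff.2 ⟨hv, hvS⟩)
        exact ⟨T, mem_insert_of_mem hT, hvT⟩
    · rw [card_sdiff_of_subset hSU, hS] at hcard
      have := Nat.div_eq_sub_div hs (hS ▸ card_le_card hSU)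
      calc #(insert S F) ≤ #F + 1 := card_insert_le _ _
        _ ≤ m + #U / s := by omega
  · refine ⟨U.image ({·}), ?_, fun v hv => ⟨{v}, mem_image_of_mem _ hv, mem_singleton_self v⟩,
      card_image_le.trans ((not_lt.1 hU).trans (Nat.le_add_right _ _))⟩
    simp

theorem colorable_of_exists_isIndepSet [Fintype V] (hs : 0 < s)
    (h : ∀ U : Finset V, m < #U → ∃ S ⊆ U, #S = s ∧ G.IsIndepSet (S : Set V)) :
    G.Colorable (m + Fintype.card V / s) := by
  classical
  obtain ⟨F, hF, hcov, hcard⟩ := exists_isIndepSet_cover hs h univ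
  choose c hcF hvc using fun v => hcov v (mem_univ v)
  have hcol : G.Coloring F := Coloring.mk (fun v => ⟨c v, hcF v⟩) fun {u v} huv heq => by
    have hcuv : c u = c v := congrArg Subtype.val heq
    exact hF _ (hcF v) (hcuv ▸ hvc u) (hvc v) (G.ne_of_adj huv) huv
  exact (Fintype.card_coe F ▸ hcol.colorable).mono hcard

end SimpleGraph

namespace Gtour

variable {n : ℕ} {x y : Fin n × Fin n}

theorem asymm (h : Gtour n x y) : ¬ Gtour n y x := by
  unfold Gtour at *
  simp only [Fin.lt_def, Fin.ext_iff, ne_eq] at *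
  omega

theorem of_fst_lt (h₁ : x.1 < y.1) (h₂ : x.2 ≠ y.2) : Gtour n x y := .inl ⟨h₁, h₂⟩

theorem of_snd_eq (h₁ : y.1 < x.1) (h₂ : x.2 = y.2) : Gtour n x y := .inr (.inl ⟨h₁, h₂⟩)

theorem fst_lt_of_snd_eq (h : Gtour n x y) (h₂ : x.2 = y.2) : y.1 < x.1 := by
  rcases h with h | h | h
  exacts [absurd h₂ h.2, h.1, absurd h₂ h.2.ne]

theorem fst_le_of_snd_ne (h : Gtour n x y) (h₂ : x.2 ≠ y.2) : x.1 ≤ y.1 := by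
  rcases h with h | h | h
  exacts [h.1.le, absurd h.2 h₂, h.1.le]

end Gtour

section MaxCard

variable {β : Type*} {U S : Finset β} {P : Finset β → Prop}

open Classical in
noncomputable def maxCard (U : Finset β) (P : Finset β → Prop) : ℕ :=
  {S ∈ U.powerset | P S}.sup card

theorem card_le_maxCard (hSU : S ⊆ U) (hS : P S) : #S ≤ maxCard U P := by
  classical
  exact le_sup (f := card) (mem_filter.2 ⟨mem_powerset.2 hSU, hS⟩)

theorem maxCard_le {c : ℕ} (h : ∀ S ⊆ U, P S → #S ≤ c) : maxCard U P ≤ c := by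
  classical
  exact Finset.sup_le fun S hS => (mem_filter.1 hS).elim fun hSU hP => h S (mem_powerset.1 hSU) hP

theorem exists_card_eq_maxCard (hSU : S ⊆ U) (hS : P S) :
    ∃ T ⊆ U, P T ∧ #T = maxCard U P := by
  classical
  obtain ⟨T, hT, hmax⟩ := exists_mem_eq_sup _ ⟨S, mem_filter.2 ⟨mem_powerset.2 hSU, hS⟩⟩ card
  exact ⟨T, mem_powerset.1 (mem_filter.1 hT).1, (mem_filter.1 hT).2, hmax.symm⟩

theorem maxCard_mem_Icc {x : β} {σ : ℕ} (hx : x ∈ U) (hPx : P {x})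
    (hσ : ∀ S ⊆ U, P S → #S ≤ σ) : maxCard U P ∈ Icc 1 σ :=
  mem_Icc.2 ⟨card_singleton x ▸ card_le_maxCard (singleton_subset_iff.2 hx) hPx, maxCard_le hσ⟩

end MaxCard

section TimeOrder

variable {n : ℕ} {α : Type*} [LinearOrder α] (t : Fin n × Fin n → α)

def IsBackward (S : Finset (Fin n × Fin n)) : Prop :=
  ∀ x ∈ S, ∀ y ∈ S, t x < t y → Gtour n y x

def IsBackwardTo (x : Fin n × Fin n) (S : Finset (Fin n × Fin n)) : Prop :=
  x ∈ S ∧ IsBackward t S ∧ ∀ y ∈ S, t y ≤ t x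

variable {t} {S T U W : Finset (Fin n × Fin n)} {w x y z : Fin n × Fin n}

theorem IsBackward.mono (hS : IsBackward t S) (hTS : T ⊆ S) : IsBackward t T :=
  fun x hx y hy => hS x (hTS hx) y (hTS hy)

theorem IsBackward.not_rel {E : Fin n × Fin n → Fin n × Fin n → Prop} (hS : IsBackward t S)
    (hsub : ∀ u v, E u v → Gtour n u v) (hE : ∀ u v, E u v → t u < t v) (hx : x ∈ S)
    (hy : y ∈ S) : ¬ E x y :=
  fun h => (hsub x y h).asymm (hS x hx y hy (hE x y h))

theorem IsBackward.isIndepSet_fromRel {E : Fin n × Fin n → Fin n × Fin n → Prop}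
    (hS : IsBackward t S) (hsub : ∀ u v, E u v → Gtour n u v) (hE : ∀ u v, E u v → t u < t v) :
    (SimpleGraph.fromRel E).IsIndepSet (S : Set (Fin n × Fin n)) :=
  fun _ hx _ hy _ hadj =>
    hadj.2.elim (hS.not_rel hsub hE hx hy) (hS.not_rel hsub hE hy hx)

theorem isBackwardTo_singleton (x : Fin n × Fin n) : IsBackwardTo t x {x} := by
  refine ⟨mem_singleton_self x, fun a ha b hb hab => ?_, fun y hy => ?_⟩ <;>
    simp only [mem_singleton] at *
  · exact absurd (ha ▸ hb ▸ hab) (lt_irrefl _)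
  · exact hy ▸ le_rfl

theorem IsBackwardTo.eq_or_gtour (ht : Function.Injective t) (hS : IsBackwardTo t x S)
    (hz : z ∈ S) : z = x ∨ Gtour n x z :=
  (hS.2.2 z hz).eq_or_lt.imp (fun h => ht h) (hS.2.1 z hz x hS.1)

theorem IsBackwardTo.insert (hS : IsBackwardTo t x S) (hxy : t x < t y)
    (hy : ∀ z ∈ S, Gtour n y z) : IsBackwardTo t y (insert y S) := by
  have hlt : ∀ z ∈ S, t z < t y := fun z hz => (hS.2.2 z hz).trans_lt hxy
  refine ⟨mem_insert_self y S, fun a ha b hb hab => ?_, fun z hz => ?_⟩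
  · obtain rfl | haS := mem_insert.1 ha
    · obtain rfl | hbS := mem_insert.1 hb
      exacts [absurd hab (lt_irrefl _), absurd hab (hlt b hbS).not_gt]
    · obtain rfl | hbS := mem_insert.1 hb
      exacts [hy a haS, hS.2.1 a haS b hbS hab]
  · obtain rfl | hz := mem_insert.1 hz
    exacts [le_rfl, (hlt z hz).le]

theorem IsBackwardTo.notMem (hS : IsBackwardTo t x S) (hxy : t x < t y) : y ∉ S :=
  fun hy => (hS.2.2 y hy).not_gt hxy

variable (t)

def IsColumnChain (x : Fin n × Fin n) (S : Finset (Fin n × Fin n)) : Prop :=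
  IsBackwardTo t x S ∧ ∀ y ∈ S, y.2 = x.2

def IsRainbowChain (x : Fin n × Fin n) (S : Finset (Fin n × Fin n)) : Prop :=
  IsBackwardTo t x S ∧ Set.InjOn Prod.snd (S : Set (Fin n × Fin n))

noncomputable def columnHeight (U : Finset (Fin n × Fin n)) (x : Fin n × Fin n) : ℕ :=
  maxCard U (IsColumnChain t x)

noncomputable def rainbowHeight (W : Finset (Fin n × Fin n)) (x : Fin n × Fin n) : ℕ :=
  maxCard W (IsRainbowChain t x)

def IsColumnDescending (W : Finset (Fin n × Fin n)) : Prop :=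
  ∀ x ∈ W, ∀ y ∈ W, x.2 = y.2 → t x < t y → y.1 < x.1

theorem isColumnChain_singleton (x : Fin n × Fin n) : IsColumnChain t x {x} :=
  ⟨isBackwardTo_singleton x, fun _ hz => mem_singleton.1 hz ▸ rfl⟩

theorem isRainbowChain_singleton (x : Fin n × Fin n) : IsRainbowChain t x {x} :=
  ⟨isBackwardTo_singleton x, by simp⟩

variable {t}

theorem columnHeight_lt (ht : Function.Injective t) (hx : x ∈ U) (hy : y ∈ U) (hcol : x.2 = y.2)
    (htime : t x < t y) (hrow : x.1 < y.1) : columnHeight t U x < columnHeight t U y := by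
  obtain ⟨S, hSU, ⟨hS, hScol⟩, hcard⟩ :=
    exists_card_eq_maxCard (singleton_subset_iff.2 hx) (isColumnChain_singleton t x)
  have hzy : ∀ z ∈ S, Gtour n y z := fun z hz => by
    refine Gtour.of_snd_eq ?_ ((hScol z hz).trans hcol).symm
    rcases hS.eq_or_gtour ht hz with rfl | hxz
    exacts [hrow, (hxz.fst_lt_of_snd_eq (hScol z hz).symm).trans hrow]
  have hext := card_le_maxCard (P := IsColumnChain t y) (insert_subset hy hSU) ⟨hS.insert htime hzy,
    fun z hz => (mem_insert.1 hz).elim (· ▸ rfl) fun hz => (hScol z hz).trans hcol⟩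
  rw [card_insert_of_notMem (hS.notMem htime), hcard] at hext
  exact hext

theorem card_lt_rainbowHeight (ht : Function.Injective t) (hSW : S ⊆ W) (hS : IsRainbowChain t w S)
    (hy : y ∈ W) (htime : t w < t y) (hrow : y.1 < w.1) (hcol : y.2 ∉ S.image Prod.snd) :
    #S < rainbowHeight t W y := by
  have hzy : ∀ z ∈ S, Gtour n y z := fun z hz => by
    refine Gtour.of_fst_lt ?_ fun h => hcol (mem_image.2 ⟨z, hz, h.symm⟩)
    rcases hS.1.eq_or_gtour ht hz with rfl | hwz
    · exact hrow
    · have hzw : z.2 ≠ w.2 := fun h => by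
        obtain rfl := hS.2 (mem_coe.2 hz) (mem_coe.2 hS.1.1) h
        exact hwz.asymm hwz
      exact hrow.trans_le (hwz.fst_le_of_snd_ne (Ne.symm hzw))
  have hinj : Set.InjOn Prod.snd ((insert y S : Finset _) : Set (Fin n × Fin n)) := by
    rw [coe_insert, Set.injOn_insert (hS.1.notMem htime), ← coe_image]
    exact ⟨hS.2, hcol⟩
  have hext := card_le_maxCard (P := IsRainbowChain t y) (insert_subset hy hSW)
    ⟨hS.1.insert htime hzy, hinj⟩
  rwa [card_insert_of_notMem (hS.1.notMem htime), Nat.add_one_le_iff] at hext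

theorem card_le_of_rainbowHeight_eq_of_fst_eq {L : Finset (Fin n × Fin n)} {r : ℕ}
    (ht : Function.Injective t) (hW : IsColumnDescending t W)
    (hLW : L ⊆ W) (hr : ∀ y ∈ L, rainbowHeight t W y = r) (hTL : T ⊆ L)
    (hrow : ∀ x ∈ T, ∀ y ∈ T, x.1 = y.1) (hlate : ∀ y ∈ T, ∃ w ∈ L, w.2 = y.2 ∧ t w < t y) :
    #T ≤ r := by
  obtain rfl | hT := T.eq_empty_or_nonempty
  · simp
  obtain ⟨x, hxT, hxmin⟩ := exists_min_image T t hT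
  obtain ⟨w, hwL, hwcol, hwx⟩ := hlate x hxT
  have hxw : x.1 < w.1 := hW w (hLW hwL) x (hLW (hTL hxT)) hwcol hwx
  obtain ⟨S, hSW, hS, hcard⟩ :=
    exists_card_eq_maxCard (singleton_subset_iff.2 (hLW hwL)) (isRainbowChain_singleton t w)
  have hcols : T.image Prod.snd ⊆ S.image Prod.snd := by
    intro c hc
    obtain ⟨y, hyT, rfl⟩ := mem_image.1 hc
    by_cases hyx : y = x
    · exact mem_image.2 ⟨w, hS.1.1, hyx ▸ hwcol⟩
    by_contra hy
    have hxy : t x < t y := (hxmin y hyT).lt_of_ne (ht.ne (Ne.symm hyx))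
    have := card_lt_rainbowHeight ht hSW hS (hLW (hTL hyT)) (hwx.trans hxy)
      (hrow y hyT x hxT ▸ hxw) hy
    exact this.ne (hcard.trans ((hr w hwL).trans (hr y (hTL hyT)).symm))
  calc #T = #(T.image Prod.snd) :=
        (card_image_of_injOn fun a ha b hb h => Prod.ext (hrow a ha b hb) h).symm
    _ ≤ #(S.image Prod.snd) := card_le_card hcols
    _ ≤ #S := card_image_le
    _ = r := hcard.trans (hr w hwL)

theorem card_le_of_rainbowHeight_eq {L : Finset (Fin n × Fin n)} {r : ℕ}
    (ht : Function.Injective t) (hW : IsColumnDescending t W)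
    (hLW : L ⊆ W) (hr : ∀ y ∈ L, rainbowHeight t W y = r) : #L ≤ n + r * n := by
  classical
  let IsFirst (y : Fin n × Fin n) : Prop := ∀ w ∈ L, w.2 = y.2 → ¬ t w < t y
  have hfirst : #{y ∈ L | IsFirst y} ≤ n := by
    refine (card_le_card_of_injOn Prod.snd (fun _ _ => mem_univ _) fun a ha b hb hab => ?_).trans
      (by simp)
    obtain ⟨haL, ha⟩ := mem_filter.1 ha
    obtain ⟨hbL, hb⟩ := mem_filter.1 hb
    by_contra hne
    rcases lt_or_gt_of_ne (ht.ne hne) with h | h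
    exacts [hb a haL hab h, ha b hbL hab.symm h]
  have hlate : #{y ∈ L | ¬ IsFirst y} ≤ r * n := by
    refine (card_le_mul_card_image_of_maps_to (f := Prod.fst) (t := univ)
      (fun _ _ => mem_univ _) r fun v _ => ?_).trans (by simp)
    refine card_le_of_rainbowHeight_eq_of_fst_eq ht hW hLW hr
      (fun y hy => (mem_filter.1 (mem_filter.1 hy).1).1) (fun x hx y hy => ?_) fun y hy => ?_
    · exact (mem_filter.1 hx).2.trans (mem_filter.1 hy).2.symm
    · simpa [IsFirst] using (mem_filter.1 (mem_filter.1 hy).1).2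
  rw [← card_filter_add_card_filter_not IsFirst]
  exact add_le_add hfirst hlate

theorem IsColumnDescending.card_le {σ : ℕ} (hW : IsColumnDescending t W)
    (ht : Function.Injective t) (hσ : ∀ S ⊆ W, IsBackward t S → #S ≤ σ) :
    #W ≤ (n + σ * n) * σ := by
  classical
  calc #W ≤ (n + σ * n) * #(Icc 1 σ) := card_le_mul_card_image_of_maps_to
        (fun x hx => maxCard_mem_Icc hx (isRainbowChain_singleton t x)
          fun S hSW hS => hσ S hSW hS.1.2.1) _
        fun r hr => (card_le_of_rainbowHeight_eq ht hW (filter_subset _ _)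
          fun _ hx => (mem_filter.1 hx).2).trans (by gcongr; exact (mem_Icc.1 hr).2)
    _ = (n + σ * n) * σ := by simp

theorem isColumnDescending_filter_columnHeight_eq (ht : Function.Injective t) (k : ℕ) :
    IsColumnDescending t {x ∈ U | columnHeight t U x = k} := by
  intro x hx y hy hcol htime
  obtain ⟨hxU, hxk⟩ := mem_filter.1 hx
  obtain ⟨hyU, hyk⟩ := mem_filter.1 hy
  rcases lt_trichotomy x.1 y.1 with hrow | hrow | hrow
  · exact absurd (hxk.trans hyk.symm) (columnHeight_lt ht hxU hyU hcol htime hrow).ne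
  · exact absurd htime (Prod.ext hrow hcol ▸ lt_irrefl _)
  · exact hrow

theorem card_le_of_isBackward_card_le {σ : ℕ} (ht : Function.Injective t)
    (hσ : ∀ S ⊆ U, IsBackward t S → #S ≤ σ) : #U ≤ (n + σ * n) * σ * σ := by
  classical
  calc #U ≤ (n + σ * n) * σ * #(Icc 1 σ) := card_le_mul_card_image_of_maps_to
        (fun x hx => maxCard_mem_Icc hx (isColumnChain_singleton t x)
          fun S hSU hS => hσ S hSU hS.1.2.1) _
        fun k _ => (isColumnDescending_filter_columnHeight_eq ht k).card_le ht
          fun S hS => hσ S (hS.trans (filter_subset _ _))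
    _ = (n + σ * n) * σ * σ := by simp

theorem exists_isBackward_card_eq {σ : ℕ} (ht : Function.Injective t)
    (hU : (n + σ * n) * σ * σ < #U) : ∃ S ⊆ U, #S = σ + 1 ∧ IsBackward t S := by
  by_contra! h
  refine hU.not_ge (card_le_of_isBackward_card_le ht fun S hSU hS => ?_)
  by_contra! hσS
  obtain ⟨T, hTS, hT⟩ := exists_subset_card_eq hσS
  exact h T (hTS.trans hSU) hT (hS.mono hTS)

end TimeOrder

theorem natCast_le_three_mul_pow_seven {x : ℝ} (hx : 0 ≤ x) {n : ℕ} (hn : (n : ℝ) = x ^ 4) :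
    (((n + ⌊x⌋₊ * n) * ⌊x⌋₊ * ⌊x⌋₊ + n * n / (⌊x⌋₊ + 1) : ℕ) : ℝ) ≤ 3 * x ^ 7 := by
  set σ := ⌊x⌋₊
  have hσx : (σ : ℝ) ≤ x := Nat.floor_le hx
  have hxσ : x < σ + 1 := Nat.lt_floor_add_one x
  have hcube : (n + σ * n) * σ * σ ≤ 2 * σ ^ 3 * n := by
    have : σ ^ 2 ≤ σ ^ 3 := by
      rcases σ.eq_zero_or_pos with h | h
      · simp [h]
      · exact Nat.pow_le_pow_right h (by norm_num)
    nlinarith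
  have hdiv : ((n * n / (σ + 1) : ℕ) : ℝ) ≤ x ^ 7 := by
    have hmul : ((n * n / (σ + 1) * (σ + 1) : ℕ) : ℝ) ≤ n * n := by
      exact_mod_cast Nat.div_mul_le_self (n * n) (σ + 1)
    push_cast at hmul
    refine le_of_mul_le_mul_right (hmul.trans ?_) (by positivity : (0 : ℝ) < σ + 1)
    rw [hn]
    nlinarith [pow_nonneg hx 7]
  have hcube' : (((n + σ * n) * σ * σ : ℕ) : ℝ) ≤ 2 * x ^ 3 * x ^ 4 := by
    rw [← hn]
    exact (Nat.cast_le.2 hcube).trans (by push_cast; gcongr)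
  push_cast at hcube' hdiv ⊢
  nlinarith

theorem stmt4_general (n : ℕ) (E' : Fin n × Fin n → Fin n × Fin n → Prop)
    (hsub : ∀ u v, E' u v → Gtour n u v) (hacyc : IsAcyclicRel E') :
    (SimpleGraph.fromRel E').chromaticNumber
      ≤ (⌊3 * (n : ℝ) ^ ((7 : ℝ) / 4)⌋₊ : ℕ∞) := by
  obtain ⟨t, ht, htE⟩ := hacyc.exists_injective_lt
  set x : ℝ := (n : ℝ) ^ ((1 : ℝ) / 4)
  have hx : 0 ≤ x := by positivity
  have hpow (k : ℕ) : (n : ℝ) ^ ((k : ℝ) / 4) = x ^ k := by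
    rw [← Real.rpow_natCast, ← Real.rpow_mul (Nat.cast_nonneg n)]
    ring_nf
  have hcol := SimpleGraph.colorable_of_exists_isIndepSet (G := SimpleGraph.fromRel E')
    (Nat.succ_pos ⌊x⌋₊) fun U hU => by
      obtain ⟨S, hSU, hS, hback⟩ := exists_isBackward_card_eq ht hU
      exact ⟨S, hSU, hS, hback.isIndepSet_fromRel hsub htE⟩
  refine hcol.chromaticNumber_le.trans (Nat.cast_le.2 (Nat.le_floor ?_))
  rw [Fintype.card_prod, Fintype.card_fin]
  have h4 : (n : ℝ) = x ^ 4 := by simpa using hpow 4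
  have h7 : (n : ℝ) ^ ((7 : ℝ) / 4) = x ^ 7 := by exact_mod_cast hpow 7
  rw [h7]
  exact natCast_le_three_mul_pow_seven hx h4

/-- Every acyclic subgraph of `G_n` has underlying chromatic number at most
`3·n^(7/4)`. -/
theorem stmt4 (n : ℕ) (hn : 0 < n) (E' : Fin n × Fin n → Fin n × Fin n → Prop)
    (hsub : ∀ u v, E' u v → Gtour n u v) (hacyc : IsAcyclicRel E') :
    (SimpleGraph.fromRel E').chromaticNumber
      ≤ (⌊3 * (n : ℝ) ^ ((7 : ℝ) / 4)⌋₊ : ℕ∞) :=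
  stmt4_general n E' hsub hacyc
end

section
/- Let n be a positive integer and let p_1 = (x_1,y_1), …, p_{2n} = (x_{2n},y_{2n}) be 2n distinct points of {1,…,n} × {1,…,n}. Then there exist four of these points p_i, p_j, p_k, p_ℓ such that y_i = y_j < y_k = y_ℓ, x_i < x_j, x_k < x_ℓ, and the intersection of the integer intervals [x_i, x_j] and [x_k, x_ℓ] contains at least two integers. -/
/-- Let `p 0, …, p (2n-1)` be `2n` distinct points of `{1,…,n} × {1,…,n}`. Then there
are four of these points `p i, p j, p k, p l` with `y_i = y_j < y_k = y_l`,
`x_i < x_j`, `x_k < x_l`, and such that the integer intervals `[x_i, x_j]` and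
`[x_k, x_l]` intersect in at least two integers. -/
theorem stmt5 (n : ℕ) (hn : 0 < n) (p : Fin (2 * n) → ℕ × ℕ)
    (hinj : Function.Injective p)
    (hmem : ∀ i, (p i).1 ∈ Finset.Icc 1 n ∧ (p i).2 ∈ Finset.Icc 1 n) :
    ∃ i j k l : Fin (2 * n),
      (p i).2 = (p j).2 ∧ (p i).2 < (p k).2 ∧ (p k).2 = (p l).2 ∧
      (p i).1 < (p j).1 ∧ (p k).1 < (p l).1 ∧
      2 ≤ (Finset.Icc (p i).1 (p j).1 ∩ Finset.Icc (p k).1 (p l).1).card := by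
  classical
  set C : ℕ → Finset ℕ := fun y =>
    (Finset.univ.filter (fun i => (p i).2 = y)).image (fun i => (p i).1) with hC
  set a : ℕ → ℕ := fun y => if h : (C y).Nonempty then (C y).min' h else 0 with ha
  set b : ℕ → ℕ := fun y => if h : (C y).Nonempty then (C y).max' h else 0 with hb
  set E : ℕ → Finset ℕ := fun y => (Finset.Icc (a y) (b y)).erase (b y) with hE
  have hCmem : ∀ {y x}, x ∈ C y → ∃ i, (p i).2 = y ∧ (p i).1 = x := by
    intro y x hx
    simp only [hC, Finset.mem_image, Finset.mem_filter] at hx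
    obtain ⟨i, ⟨_, h1⟩, h2⟩ := hx
    exact ⟨i, h1, h2⟩
  have hCsub : ∀ y, C y ⊆ Finset.Icc 1 n := by
    intro y x hx
    obtain ⟨i, _, h2⟩ := hCmem hx
    exact h2 ▸ (hmem i).1
  have hEprop : ∀ {y c}, c ∈ E y → (C y).Nonempty ∧ a y ≤ c ∧ c + 1 ≤ b y := by
    intro y c hc
    simp only [hE, Finset.mem_erase, Finset.mem_Icc] at hc
    by_cases h : (C y).Nonempty
    · refine ⟨h, hc.2.1, ?_⟩
      have := hc.1
      omega
    · exfalso
      have h1 : a y = 0 := by simp [ha, h]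
      have h2 : b y = 0 := by simp [hb, h]
      omega
  have hab : ∀ y (h : (C y).Nonempty), a y ∈ C y ∧ b y ∈ C y ∧ a y ≤ b y := by
    intro y h
    have h1 : a y = (C y).min' h := by simp [ha, h]
    have h2 : b y = (C y).max' h := by simp [hb, h]
    exact ⟨h1 ▸ (C y).min'_mem h, h2 ▸ (C y).max'_mem h,
      h1 ▸ h2 ▸ (C y).min'_le _ ((C y).max'_mem h)⟩
  have hEsub : ∀ y, E y ⊆ Finset.Icc 1 (n - 1) := by
    intro y c hc
    obtain ⟨hne, h1, h2⟩ := hEprop hc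
    obtain ⟨haC, hbC, -⟩ := hab y hne
    have ha1 := Finset.mem_Icc.mp (hCsub y haC)
    have hb1 := Finset.mem_Icc.mp (hCsub y hbC)
    exact Finset.mem_Icc.mpr ⟨le_trans ha1.1 h1, by omega⟩
  have hcardE : ∀ y, (C y).card ≤ (E y).card + 1 := by
    intro y
    by_cases h : (C y).Nonempty
    · obtain ⟨haC, hbC, hle⟩ := hab y h
      have h1 : a y = (C y).min' h := by simp [ha, h]
      have h2 : b y = (C y).max' h := by simp [hb, h]
      have hsub : C y ⊆ Finset.Icc (a y) (b y) := by
        intro x hx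
        exact Finset.mem_Icc.mpr ⟨h1 ▸ (C y).min'_le x hx, h2 ▸ (C y).le_max' x hx⟩
      calc (C y).card ≤ (Finset.Icc (a y) (b y)).card := Finset.card_le_card hsub
        _ = (E y).card + 1 :=
          (Finset.card_erase_add_one (Finset.mem_Icc.mpr ⟨hle, le_refl _⟩)).symm
    · simp [Finset.not_nonempty_iff_eq_empty.mp h]
  have hsumC : 2 * n ≤ ∑ y ∈ Finset.Icc 1 n, (C y).card := by
    have h1 : (Finset.univ : Finset (Fin (2*n))).card
        = ∑ y ∈ Finset.Icc 1 n, ((Finset.univ.filter fun i => (p i).2 = y)).card :=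
      Finset.card_eq_sum_card_fiberwise (fun i _ => (hmem i).2)
    have h2 : ∀ y, ((Finset.univ.filter fun i => (p i).2 = y)).card = (C y).card := by
      intro y
      rw [hC]
      refine (Finset.card_image_of_injOn ?_).symm
      intro i hi j hj hij
      simp only [Finset.coe_filter, Set.mem_setOf_eq] at hi hj
      exact hinj (Prod.ext hij (hi.2.trans hj.2.symm))
    simp only [h2] at h1
    simp only [Finset.card_univ, Fintype.card_fin] at h1
    omega
  have hsumE : n ≤ ∑ y ∈ Finset.Icc 1 n, (E y).card := by
    have h1 : ∑ y ∈ Finset.Icc 1 n, (C y).card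
        ≤ ∑ y ∈ Finset.Icc 1 n, ((E y).card + 1) :=
      Finset.sum_le_sum fun y _ => hcardE y
    rw [Finset.sum_add_distrib, Finset.sum_const, smul_eq_mul, mul_one] at h1
    have hcard : (Finset.Icc 1 n).card = n := by simp [Nat.card_Icc]
    omega
  set s : Finset (Σ _ : ℕ, ℕ) := (Finset.Icc 1 n).sigma E with hs
  have hscard : n ≤ s.card := by rw [hs, Finset.card_sigma]; exact hsumE
  have hmaps : ∀ q ∈ s, q.2 ∈ Finset.Icc 1 (n - 1) := by
    intro q hq
    rw [hs, Finset.mem_sigma] at hq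
    exact hEsub q.1 hq.2
  have hlt : (Finset.Icc 1 (n - 1)).card * 1 < s.card := by
    have : (Finset.Icc 1 (n - 1)).card = n - 1 := by simp [Nat.card_Icc]
    omega
  obtain ⟨c, hct, hc2⟩ :=
    Finset.exists_lt_card_fiber_of_mul_lt_card_of_maps_to hmaps hlt
  obtain ⟨u, hu, v, hv, huv⟩ := Finset.one_lt_card.mp hc2
  simp only [Finset.mem_filter, hs, Finset.mem_sigma] at hu hv
  obtain ⟨y1, c1⟩ := u
  obtain ⟨y2, c2⟩ := v
  obtain ⟨⟨-, hy1E⟩, hc1⟩ := hu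
  obtain ⟨⟨-, hy2E⟩, hc2'⟩ := hv
  simp only at hc1 hc2' hy1E hy2E
  rw [hc1] at hy1E
  rw [hc2'] at hy2E
  have hyne : y1 ≠ y2 := by
    intro h
    subst h
    rw [hc1, hc2'] at huv
    exact huv rfl
  have getpts : ∀ y, c ∈ E y → ∃ i j : Fin (2 * n),
      (p i).2 = y ∧ (p j).2 = y ∧ (p i).1 ≤ c ∧ c + 1 ≤ (p j).1 ∧ (p i).1 < (p j).1 := by
    intro y hc
    obtain ⟨hne, h1, h2⟩ := hEprop hc
    obtain ⟨haC, hbC, -⟩ := hab y hne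
    obtain ⟨i, hi1, hi2⟩ := hCmem haC
    obtain ⟨j, hj1, hj2⟩ := hCmem hbC
    exact ⟨i, j, hi1, hj1, by omega, by omega, by omega⟩
  have main : ∀ y y', y < y' → c ∈ E y → c ∈ E y' →
      ∃ i j k l : Fin (2 * n),
        (p i).2 = (p j).2 ∧ (p i).2 < (p k).2 ∧ (p k).2 = (p l).2 ∧
        (p i).1 < (p j).1 ∧ (p k).1 < (p l).1 ∧
        2 ≤ (Finset.Icc (p i).1 (p j).1 ∩ Finset.Icc (p k).1 (p l).1).card := by
    intro y y' hyy hcy hcy'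
    obtain ⟨i, j, hi, hj, h1, h2, h3⟩ := getpts y hcy
    obtain ⟨k, l, hk, hl, h4, h5, h6⟩ := getpts y' hcy'
    refine ⟨i, j, k, l, hi.trans hj.symm, by omega, hk.trans hl.symm, h3, h6, ?_⟩
    have hsub : ({c, c + 1} : Finset ℕ)
        ⊆ Finset.Icc (p i).1 (p j).1 ∩ Finset.Icc (p k).1 (p l).1 := by
      intro x hx
      simp only [Finset.mem_insert, Finset.mem_singleton] at hx
      simp only [Finset.mem_inter, Finset.mem_Icc]
      omega
    calc 2 = ({c, c + 1} : Finset ℕ).card := (Finset.card_pair (by omega)).symm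
      _ ≤ _ := Finset.card_le_card hsub
  rcases lt_or_gt_of_ne hyne with h | h
  · exact main y1 y2 h hy1E hy2E
  · exact main y2 y1 h hy2E hy1E
end

section
/- For every positive integer n, the set of 2n − 1 points of {1,…,n} × {1,…,n} consisting of (i,i) and (i+1,i) for i = 1,…,n−1 together with the point (n,n) contains no four points p_i = (x_i,y_i), p_j = (x_j,y_j), p_k = (x_k,y_k), p_ℓ = (x_ℓ,y_ℓ) satisfying y_i = y_j < y_k = y_ℓ, x_i < x_j, x_k < x_ℓ, and such that the intersection of the integer intervals [x_i, x_j] and [x_k, x_ℓ] contains at least two integers. -/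
/-- The set of `2n - 1` points of `{1,…,n} × {1,…,n}` consisting of the points
`(i, i)` and `(i+1, i)` for `i = 1, …, n-1` together with the point `(n, n)`. -/
def tightPointSet (n : ℕ) : Finset (ℕ × ℕ) :=
  ((Finset.Icc 1 (n - 1)).image fun i => (i, i)) ∪
    ((Finset.Icc 1 (n - 1)).image fun i => (i + 1, i)) ∪ {(n, n)}

lemma mem_tps {n : ℕ} {q : ℕ × ℕ} :
    q ∈ tightPointSet n ↔
      (∃ i, 1 ≤ i ∧ i ≤ n - 1 ∧ (q = (i, i) ∨ q = (i + 1, i))) ∨ q = (n, n) := by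
  simp only [tightPointSet, Finset.mem_union, Finset.mem_image, Finset.mem_Icc,
    Finset.mem_singleton]
  constructor
  · rintro ((⟨i, ⟨h1, h2⟩, rfl⟩ | ⟨i, ⟨h1, h2⟩, rfl⟩) | h)
    · exact Or.inl ⟨i, h1, h2, Or.inl rfl⟩
    · exact Or.inl ⟨i, h1, h2, Or.inr rfl⟩
    · exact Or.inr h
  · rintro (⟨i, h1, h2, rfl | rfl⟩ | rfl)
    · exact Or.inl (Or.inl ⟨i, ⟨h1, h2⟩, rfl⟩)
    · exact Or.inl (Or.inr ⟨i, ⟨h1, h2⟩, rfl⟩)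
    · exact Or.inr rfl

lemma tps_struct {n : ℕ} (hn : 0 < n) {q : ℕ × ℕ} (hq : q ∈ tightPointSet n) :
    1 ≤ q.2 ∧ q.2 ≤ n ∧ q.1 ≤ n ∧ (q.1 = q.2 ∨ q.1 = q.2 + 1) ∧
      (q.2 = n → q.1 = n) := by
  rw [mem_tps] at hq
  rcases hq with ⟨i, h1, h2, rfl | rfl⟩ | rfl <;> simp <;> omega

/-- For every positive integer `n`, `tightPointSet n` is a set of `2n - 1` points of
`{1,…,n} × {1,…,n}` containing no four points `p_i, p_j, p_k, p_l` with
`y_i = y_j < y_k = y_l`, `x_i < x_j`, `x_k < x_l`, and such that the integer intervals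
`[x_i, x_j]` and `[x_k, x_l]` intersect in at least two integers. -/
theorem stmt6 (n : ℕ) (hn : 0 < n) :
    (tightPointSet n).card = 2 * n - 1 ∧
    (∀ q ∈ tightPointSet n, q.1 ∈ Finset.Icc 1 n ∧ q.2 ∈ Finset.Icc 1 n) ∧
    ¬ ∃ pi pj pk pl : ℕ × ℕ,
      pi ∈ tightPointSet n ∧ pj ∈ tightPointSet n ∧
      pk ∈ tightPointSet n ∧ pl ∈ tightPointSet n ∧
      pi.2 = pj.2 ∧ pi.2 < pk.2 ∧ pk.2 = pl.2 ∧
      pi.1 < pj.1 ∧ pk.1 < pl.1 ∧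
      2 ≤ (Finset.Icc pi.1 pj.1 ∩ Finset.Icc pk.1 pl.1).card := by
  refine ⟨?_, ?_, ?_⟩
  · -- cardinality
    have hd1 : Disjoint ((Finset.Icc 1 (n - 1)).image fun i => ((i, i) : ℕ × ℕ))
        ((Finset.Icc 1 (n - 1)).image fun i => ((i + 1, i) : ℕ × ℕ)) := by
      rw [Finset.disjoint_left]
      rintro a ha hb
      simp only [Finset.mem_image, Finset.mem_Icc] at ha hb
      obtain ⟨i, hi, rfl⟩ := ha
      obtain ⟨j, hj, hji⟩ := hb
      have := congrArg Prod.fst hji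
      have := congrArg Prod.snd hji
      simp_all
    have hd2 : Disjoint (((Finset.Icc 1 (n - 1)).image fun i => ((i, i) : ℕ × ℕ)) ∪
        ((Finset.Icc 1 (n - 1)).image fun i => ((i + 1, i) : ℕ × ℕ))) ({(n, n)} : Finset (ℕ × ℕ)) := by
      rw [Finset.disjoint_right]
      rintro a ha hb
      simp only [Finset.mem_singleton] at ha
      subst ha
      simp only [Finset.mem_union, Finset.mem_image, Finset.mem_Icc, Prod.mk.injEq] at hb
      rcases hb with ⟨i, hi, h1, h2⟩ | ⟨i, hi, h1, h2⟩ <;> omega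
    have hc1 : ((Finset.Icc 1 (n - 1)).image fun i => ((i, i) : ℕ × ℕ)).card = n - 1 := by
      rw [Finset.card_image_of_injective _ (fun a b h => (Prod.mk.injEq _ _ _ _ ▸ h).1),
        Nat.card_Icc]; omega
    have hc2 : ((Finset.Icc 1 (n - 1)).image fun i => ((i + 1, i) : ℕ × ℕ)).card = n - 1 := by
      rw [Finset.card_image_of_injective _ (fun a b h => (Prod.mk.injEq _ _ _ _ ▸ h).2),
        Nat.card_Icc]; omega
    rw [tightPointSet, Finset.card_union_of_disjoint hd2, Finset.card_union_of_disjoint hd1,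
      hc1, hc2, Finset.card_singleton]
    omega
  · intro q hq
    obtain ⟨h1, h2, h3, h4, h5⟩ := tps_struct hn hq
    simp only [Finset.mem_Icc]
    omega
  · rintro ⟨pi, pj, pk, pl, hpi, hpj, hpk, hpl, hy1, hy2, hy3, hx1, hx2, hcard⟩
    obtain ⟨i1, i2, i3, i4, i5⟩ := tps_struct hn hpi
    obtain ⟨j1, j2, j3, j4, j5⟩ := tps_struct hn hpj
    obtain ⟨k1, k2, k3, k4, k5⟩ := tps_struct hn hpk
    obtain ⟨l1, l2, l3, l4, l5⟩ := tps_struct hn hpl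
    -- pi.1 = pi.2, pj.1 = pi.2 + 1, pk.1 = pk.2, pl.1 = pk.2 + 1
    have hi : pi.1 = pi.2 := by omega
    have hj : pj.1 = pi.2 + 1 := by omega
    have hk : pk.1 = pk.2 := by omega
    have hl : pl.1 = pk.2 + 1 := by omega
    rw [hi, hj, hk, hl] at hcard
    have hsub : Finset.Icc pi.2 (pi.2 + 1) ∩ Finset.Icc pk.2 (pk.2 + 1) ⊆
        Finset.Icc pk.2 (pi.2 + 1) := by
      intro x hx
      simp only [Finset.mem_inter, Finset.mem_Icc] at hx ⊢
      omega
    have := Finset.card_le_card hsub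
    rw [Nat.card_Icc] at this
    omega
end

section
/- Let H be a finite simple graph that is a subdivision of K_4 (each edge of K_4 is replaced by a path of length at least 1, internally disjoint from the other paths), and suppose H is not bipartite. Then every orientation of H contains an inconsistent odd cycle, i.e., a cycle of odd length in the underlying undirected graph whose edges do not all point consistently around the cycle (so it is not a directed cycle). -/
/-- `E` is an orientation of the simple graph `H`: every edge of `H` gets exactly one
direction, and `E` only uses edges of `H`. -/
def IsOrientation {V : Type*} (H : SimpleGraph V) (E : V → V → Prop) : Prop :=
  (∀ u v, H.Adj u v ↔ (E u v ∨ E v u)) ∧ (∀ u v, ¬ (E u v ∧ E v u))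

/-- `H` is a subdivision of `K₄`: there are four distinct branch vertices `b 0, …, b 3`
and, for each pair of branch vertices, a path of `H` (of length at least 1) joining
them, such that branch vertices occur on a path only as its endpoints, two distinct
paths meet only in branch vertices (so the paths are internally disjoint), and every
vertex and every edge of `H` lies on one of the six paths. -/
def IsK4Subdivision {V : Type*} (H : SimpleGraph V) : Prop :=
  ∃ (b : Fin 4 → V) (p : ∀ i j : Fin 4, i < j → H.Walk (b i) (b j)),
    Function.Injective b ∧
    (∀ i j (h : i < j), (p i j h).IsPath) ∧
    (∀ i j (h : i < j) (k : Fin 4), b k ∈ (p i j h).support → k = i ∨ k = j) ∧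
    (∀ i j (h : i < j) (i' j' : Fin 4) (h' : i' < j'), (i, j) ≠ (i', j') →
      ∀ v, v ∈ (p i j h).support → v ∈ (p i' j' h').support → ∃ k, v = b k) ∧
    (∀ v : V, ∃ (i j : Fin 4) (h : i < j), v ∈ (p i j h).support) ∧
    (∀ e ∈ H.edgeSet, ∃ (i j : Fin 4) (h : i < j), e ∈ (p i j h).edges)

/-!
Write `b₀, …, b₃` for the branch vertices and `P_ij` for the subdivided path from `b_i` to `b_j`.
If every triangle `P_ij P_jl P_li` had even length, there would be `y : Fin 4 → ℕ` with
`|P_ij| ≡ y_i + y_j (mod 2)`, and giving the `t`-th vertex of `P_ij` the colour `y_i + t (mod 2)`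
would be a proper 2-colouring. So some triangle on `b_i, b_j, b_l` is odd; let `b_k` be the fourth
branch vertex. For two of `i, j, l`, say `a` and `c`, with `m` the third, the routes `P_ac` and
`P_am P_mc` from `b_a` to `b_c` have lengths of different parity, so one of them closes
`P_ka, P_ck` into an odd cycle through `b_k`. Were that cycle directed, the first edges of `P_ka`
and `P_kc` would point one into and one out of `b_k`. This cannot hold for all three pairs from
`{i, j, l}`.
-/

open SimpleGraph Walk

namespace SimpleGraph.Walk

variable {V : Type*} {G : SimpleGraph V}

lemma IsPath.start_notMem_support_tail {u v : V} {p : G.Walk u v} (hp : p.IsPath) :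
    u ∉ p.support.tail :=
  (List.nodup_cons.mp (p.cons_tail_support ▸ hp.support_nodup)).1

lemma IsPath.append {u v w : V} {p : G.Walk u v} {q : G.Walk v w} (hp : p.IsPath)
    (hq : q.IsPath) (hpq : ∀ x ∈ p.support, x ∈ q.support → x = v) : (p.append q).IsPath := by
  rw [isPath_def, support_append]
  refine hp.support_nodup.append hq.support_nodup.tail fun x hxp hxq => ?_
  obtain rfl := hpq x hxp (List.mem_of_mem_tail hxq)
  exact hq.start_notMem_support_tail hxq

lemma IsPath.isCycle_append_append {x y z : V} {p : G.Walk x y} {q : G.Walk y z}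
    {r : G.Walk z x} (hp : p.IsPath) (hq : q.IsPath) (hr : r.IsPath) (hyz : y ≠ z)
    (hzx : z ≠ x) (hpq : ∀ v ∈ p.support, v ∈ q.support → v = y)
    (hqr : ∀ v ∈ q.support, v ∈ r.support → v = z)
    (hrp : ∀ v ∈ r.support, v ∈ p.support → v = x) :
    (p.append (q.append r)).IsCycle := by
  refine hp.isCycle_append (hq.append hr hqr) (fun v hvp hvqr => ?_) (Or.inr ?_)
  · rw [tail_support_append, List.mem_append] at hvqr
    rcases hvqr with hvq | hvr
    · obtain rfl := hpq v (List.mem_of_mem_tail hvp) (List.mem_of_mem_tail hvq)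
      exact hq.start_notMem_support_tail hvq
    · obtain rfl := hrp v (List.mem_of_mem_tail hvr) (List.mem_of_mem_tail hvp)
      exact hp.start_notMem_support_tail hvp
  · have hq0 : q.length ≠ 0 := fun h => hyz (eq_of_length_eq_zero h)
    have hr0 : r.length ≠ 0 := fun h => hzx (eq_of_length_eq_zero h)
    rw [length_append]
    omega

lemma snd_append_of_not_nil {u v w : V} {p : G.Walk u v} (hp : ¬p.Nil) (q : G.Walk v w) :
    (p.append q).snd = p.snd := by
  cases p with
  | nil => exact absurd Nil.nil hp
  | cons h p => rw [cons_append, snd_cons, snd_cons]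

lemma penultimate_append_of_not_nil {u v w : V} (p : G.Walk u v) {q : G.Walk v w}
    (hq : ¬q.Nil) : (p.append q).penultimate = q.penultimate := by
  rw [← snd_reverse, reverse_append, snd_append_of_not_nil (by simpa using hq), snd_reverse]

lemma snd_iff_not_penultimate_of_directed {E : V → V → Prop}
    (hE : ∀ u v, ¬ (E u v ∧ E v u)) {v : V} {w : G.Walk v v} (hw : ¬w.Nil)
    (hdir : (∀ d ∈ w.darts, E d.toProd.1 d.toProd.2) ∨
      (∀ d ∈ w.darts, E d.toProd.2 d.toProd.1)) :
    E w.snd v ↔ ¬E w.penultimate v := by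
  rcases hdir with h | h
  · have hout : E v w.snd := h _ (w.firstDart_mem_darts hw)
    have hin : E w.penultimate v := h _ (w.lastDart_mem_darts hw)
    exact iff_of_false (fun h' => hE _ _ ⟨hout, h'⟩) (not_not.mpr hin)
  · have hin : E w.snd v := h _ (w.firstDart_mem_darts hw)
    have hout : E v w.penultimate := h _ (w.lastDart_mem_darts hw)
    exact iff_of_true hin (fun h' => hE _ _ ⟨h', hout⟩)

end SimpleGraph.Walk

structure K4Subdivision {V : Type*} (H : SimpleGraph V) where
  branch : Fin 4 → V
  path : ∀ i j : Fin 4, i ≠ j → H.Walk (branch i) (branch j)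
  injective_branch : Function.Injective branch
  isPath_path : ∀ i j h, (path i j h).IsPath
  mem_of_branch_mem_support : ∀ i j h k, branch k ∈ (path i j h).support → k ∈ s(i, j)
  exists_eq_branch : ∀ i j h i' j' h', s(i, j) ≠ s(i', j') →
    ∀ v ∈ (path i j h).support, v ∈ (path i' j' h').support → ∃ k, v = branch k
  path_swap : ∀ i j h, path j i (Ne.symm h) = (path i j h).reverse
  exists_mem_support : ∀ v, ∃ i j h, v ∈ (path i j h).support
  exists_mem_edges : ∀ e ∈ H.edgeSet, ∃ i j h, e ∈ (path i j h).edges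

lemma IsK4Subdivision.nonempty_k4Subdivision {V : Type*} {H : SimpleGraph V}
    (hH : IsK4Subdivision H) : Nonempty (K4Subdivision H) := by
  obtain ⟨b, p, hinj, hpath, hbranch, hdisj, hcover, hedge⟩ := hH
  let q : ∀ i j : Fin 4, i ≠ j → H.Walk (b i) (b j) := fun i j h =>
    if hlt : i < j then p i j hlt else (p j i (lt_of_le_of_ne (not_lt.mp hlt) h.symm)).reverse
  have hq : ∀ i j (h : i ≠ j), (q i j h).IsPath ∧ ∃ (i' j' : Fin 4) (h' : i' < j'),
      s(i, j) = s(i', j') ∧ ∀ v, v ∈ (q i j h).support ↔ v ∈ (p i' j' h').support := by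
    intro i j h
    by_cases hlt : i < j
    · exact ⟨by simpa [q, hlt] using hpath i j hlt, i, j, hlt, rfl, by simp [q, hlt]⟩
    · have hji : j < i := lt_of_le_of_ne (not_lt.mp hlt) h.symm
      exact ⟨by simpa [q, hlt] using hpath j i hji, j, i, hji, Sym2.eq_swap, by simp [q, hlt]⟩
  refine ⟨b, q, hinj, fun i j h => (hq i j h).1, ?_, ?_, ?_, ?_, ?_⟩
  · intro i j h k hk
    obtain ⟨-, i', j', h', hs, hsupp⟩ := hq i j h
    rw [hs, Sym2.mem_iff]
    exact hbranch i' j' h' k ((hsupp _).mp hk)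
  · intro i j h i' j' h' hne v hv hv'
    obtain ⟨-, i₁, j₁, h₁, hs₁, hsupp₁⟩ := hq i j h
    obtain ⟨-, i₂, j₂, h₂, hs₂, hsupp₂⟩ := hq i' j' h'
    refine hdisj i₁ j₁ h₁ i₂ j₂ h₂ (fun heq => hne ?_) v ((hsupp₁ v).mp hv) ((hsupp₂ v).mp hv')
    rw [hs₁, hs₂, Prod.mk.inj heq |>.1, Prod.mk.inj heq |>.2]
  · intro i j h
    rcases h.lt_or_gt with hlt | hlt <;> simp [q, hlt, not_lt_of_gt hlt]
  · intro v
    obtain ⟨i, j, hlt, hv⟩ := hcover v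
    exact ⟨i, j, hlt.ne, by simpa [q, hlt] using hv⟩
  · intro e he
    obtain ⟨i, j, hlt, he⟩ := hedge e he
    exact ⟨i, j, hlt.ne, by simpa [q, hlt] using he⟩

namespace K4Subdivision

variable {V : Type*} {H : SimpleGraph V} (S : K4Subdivision H)

lemma not_nil_path {i j : Fin 4} (h : i ≠ j) : ¬(S.path i j h).Nil :=
  fun hnil => h (S.injective_branch hnil.eq)

lemma length_path_swap {i j : Fin 4} (h : i ≠ j) :
    (S.path j i (Ne.symm h)).length = (S.path i j h).length := by
  rw [S.path_swap, length_reverse]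

lemma mem_support_path_swap {i j : Fin 4} (h : i ≠ j) {v : V} :
    v ∈ (S.path j i (Ne.symm h)).support ↔ v ∈ (S.path i j h).support := by
  rw [S.path_swap, support_reverse, List.mem_reverse]

lemma penultimate_path_swap {i j : Fin 4} (h : i ≠ j) :
    (S.path j i (Ne.symm h)).penultimate = (S.path i j h).snd := by
  rw [S.path_swap, penultimate_reverse]

lemma eq_branch_of_mem_support {i j l : Fin 4} (hij : i ≠ j) (hil : i ≠ l) (hjl : j ≠ l) {v : V}
    (hvj : v ∈ (S.path i j hij).support) (hvl : v ∈ (S.path i l hil).support) :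
    v = S.branch i := by
  obtain ⟨k, rfl⟩ := S.exists_eq_branch i j hij i l hil (by simp [hjl, hil]) v hvj hvl
  have hkj := S.mem_of_branch_mem_support i j hij k hvj
  have hkl := S.mem_of_branch_mem_support i l hil k hvl
  rw [Sym2.mem_iff] at hkj hkl
  obtain rfl | rfl := hkj
  · rfl
  · exact absurd (hkl.resolve_right hjl) hij.symm

lemma notMem_support_of_mem_support {i j k l : Fin 4} (hij : i ≠ j) (hkl : k ≠ l) (hik : i ≠ k)
    (hil : i ≠ l) (hjk : j ≠ k) (hjl : j ≠ l) {v : V} (hv : v ∈ (S.path i j hij).support) :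
    v ∉ (S.path k l hkl).support := fun hv' => by
  obtain ⟨m, rfl⟩ := S.exists_eq_branch i j hij k l hkl
    (by simp [hik, hil]) v hv hv'
  have hmij := S.mem_of_branch_mem_support i j hij m hv
  have hmkl := S.mem_of_branch_mem_support k l hkl m hv'
  rw [Sym2.mem_iff] at hmij hmkl
  obtain rfl | rfl := hmij <;> obtain rfl | rfl := hmkl <;> contradiction

lemma getVert_eq_branch {i j : Fin 4} {h : i ≠ j} {t : ℕ} {k : Fin 4}
    (ht : t ≤ (S.path i j h).length) (hv : (S.path i j h).getVert t = S.branch k) :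
    (k = i ∧ t = 0) ∨ (k = j ∧ t = (S.path i j h).length) := by
  have hk := S.mem_of_branch_mem_support i j h k (hv ▸ getVert_mem_support _ t)
  rw [Sym2.mem_iff] at hk
  obtain rfl | rfl := hk
  · exact Or.inl ⟨rfl, ((S.isPath_path k j h).getVert_eq_start_iff ht).mp hv⟩
  · exact Or.inr ⟨rfl, ((S.isPath_path i k h).getVert_eq_end_iff ht).mp hv⟩

lemma exists_potential
    (heven : ∀ (i j l : Fin 4) (hij : i ≠ j) (hjl : j ≠ l) (hli : l ≠ i),
      Even ((S.path i j hij).length + (S.path j l hjl).length + (S.path l i hli).length)) :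
    ∃ y : Fin 4 → ℕ, ∀ i j (h : i ≠ j), (S.path i j h).length % 2 = (y i + y j) % 2 := by
  refine ⟨fun i => if h : 0 = i then 0 else (S.path 0 i h).length, fun i j hij => ?_⟩
  by_cases hi : 0 = i
  · subst hi
    simp [hij]
  · by_cases hj : 0 = j
    · subst hj
      simp [hi, ← S.length_path_swap hi]
    · have htri := heven 0 i j hi hij (Ne.symm hj)
      rw [S.length_path_swap hj, Nat.even_iff] at htri
      simp only [hi, hj, dite_false]
      omega

lemma parity_eq_of_getVert_eq (y : Fin 4 → ℕ)
    (hy : ∀ i j (h : i ≠ j), (S.path i j h).length % 2 = (y i + y j) % 2)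
    {i j i' j' : Fin 4} {h : i ≠ j} {h' : i' ≠ j'} {t t' : ℕ} (ht : t ≤ (S.path i j h).length)
    (ht' : t' ≤ (S.path i' j' h').length)
    (hv : (S.path i j h).getVert t = (S.path i' j' h').getVert t') :
    (y i + t) % 2 = (y i' + t') % 2 := by
  have hbranch : ∀ {i j : Fin 4} {h : i ≠ j} {t : ℕ} {k : Fin 4}, t ≤ (S.path i j h).length →
      (S.path i j h).getVert t = S.branch k → (y i + t) % 2 = y k % 2 := by
    intro i j h t k ht hv
    rcases S.getVert_eq_branch ht hv with ⟨rfl, rfl⟩ | ⟨rfl, rfl⟩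
    · rfl
    · have := hy i k h
      omega
  by_cases hb : ∃ k, (S.path i j h).getVert t = S.branch k
  · obtain ⟨k, hk⟩ := hb
    rw [hbranch ht hk, hbranch ht' (hv ▸ hk)]
  have hs : s(i, j) = s(i', j') := by
    by_contra hne
    exact hb (S.exists_eq_branch i j h i' j' h' hne _ (getVert_mem_support _ t)
      (hv ▸ getVert_mem_support _ t'))
  rcases Sym2.eq_iff.mp hs with ⟨rfl, rfl⟩ | ⟨rfl, rfl⟩
  · rw [(S.isPath_path i j h).getVert_injOn ht ht' hv]
  · rw [S.path_swap i j h, getVert_reverse] at hv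
    rw [S.length_path_swap h] at ht'
    have htt' := (S.isPath_path i j h).getVert_injOn ht (Nat.sub_le _ t') hv
    have := hy i j h
    omega

lemma colorable_two_of_potential (y : Fin 4 → ℕ)
    (hy : ∀ i j (h : i ≠ j), (S.path i j h).length % 2 = (y i + y j) % 2) : H.Colorable 2 := by
  have hpos : ∀ v, ∃ (i j : Fin 4) (h : i ≠ j) (t : ℕ),
      t ≤ (S.path i j h).length ∧ (S.path i j h).getVert t = v := fun v => by
    obtain ⟨i, j, h, hv⟩ := S.exists_mem_support v
    obtain ⟨t, rfl, ht⟩ := mem_support_iff_exists_getVert.mp hv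
    exact ⟨i, j, h, t, ht, rfl⟩
  choose i j h t ht hv using hpos
  refine ⟨Coloring.mk (fun v => ⟨(y (i v) + t v) % 2, Nat.mod_lt _ two_pos⟩) fun {u w} huw => ?_⟩
  obtain ⟨i₀, j₀, h₀, he⟩ := S.exists_mem_edges s(u, w) huw
  obtain ⟨n, hn, hnuw⟩ := (mk_mem_edges_iff_exists _).mp he
  have hcolor : ∀ {x s}, s ≤ (S.path i₀ j₀ h₀).length → (S.path i₀ j₀ h₀).getVert s = x →
      (y (i x) + t x) % 2 = (y i₀ + s) % 2 := fun hs hx =>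
    S.parity_eq_of_getVert_eq y hy (ht _) hs ((hv _).trans hx.symm)
  rw [ne_eq, Fin.mk.injEq]
  rcases Sym2.eq_iff.mp hnuw with ⟨hu, hw⟩ | ⟨hu, hw⟩
  · rw [hcolor hn.le hu, hcolor hn hw]
    omega
  · rw [hcolor hn hw, hcolor hn.le hu]
    omega

lemma exists_odd_triangle (hnb : ¬H.Colorable 2) :
    ∃ (i j l : Fin 4) (hij : i ≠ j) (hjl : j ≠ l) (hli : l ≠ i),
      Odd ((S.path i j hij).length + (S.path j l hjl).length + (S.path l i hli).length) := by
  by_contra! heven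
  obtain ⟨y, hy⟩ := S.exists_potential fun i j l hij hjl hli =>
    Nat.not_odd_iff_even.mp (heven i j l hij hjl hli)
  exact hnb (S.colorable_two_of_potential y hy)

lemma isCycle_path_append_append_path {k a c : Fin 4} (hka : k ≠ a) (hkc : k ≠ c) (hac : a ≠ c)
    {M : H.Walk (S.branch a) (S.branch c)} (hM : M.IsPath)
    (hMa : ∀ v ∈ M.support, v ∈ (S.path a k (Ne.symm hka)).support → v = S.branch a)
    (hMc : ∀ v ∈ M.support, v ∈ (S.path c k (Ne.symm hkc)).support → v = S.branch c) :
    ((S.path k a hka).append (M.append (S.path c k (Ne.symm hkc)))).IsCycle :=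
  (S.isPath_path k a hka).isCycle_append_append hM (S.isPath_path c k _)
    (fun h => hac (S.injective_branch h)) (fun h => hkc (S.injective_branch h).symm)
    (fun v hva hvM => hMa v hvM ((S.mem_support_path_swap hka).mpr hva)) hMc
    (fun _ hvc hva => S.eq_branch_of_mem_support hkc hka (Ne.symm hac)
      ((S.mem_support_path_swap hkc).mp hvc) hva)

lemma isCycle_triangle {k a c : Fin 4} (hka : k ≠ a) (hkc : k ≠ c) (hac : a ≠ c) :
    ((S.path k a hka).append ((S.path a c hac).append (S.path c k (Ne.symm hkc)))).IsCycle :=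
  S.isCycle_path_append_append_path hka hkc hac (S.isPath_path a c hac)
    (fun _ hvc hvk => S.eq_branch_of_mem_support hac (Ne.symm hka) (Ne.symm hkc) hvc hvk)
    (fun _ hva hvk => S.eq_branch_of_mem_support (Ne.symm hac) (Ne.symm hkc) (Ne.symm hka)
      ((S.mem_support_path_swap hac).mpr hva) hvk)

lemma isCycle_quadrilateral {k a c m : Fin 4} (hka : k ≠ a) (hkc : k ≠ c) (hkm : k ≠ m)
    (hac : a ≠ c) (ham : a ≠ m) (hcm : c ≠ m) :
    ((S.path k a hka).append (((S.path a m ham).append (S.path m c (Ne.symm hcm))).append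
      (S.path c k (Ne.symm hkc)))).IsCycle := by
  refine S.isCycle_path_append_append_path hka hkc hac ?_ (fun v hv hvk => ?_) (fun v hv hvk => ?_)
  · refine (S.isPath_path a m ham).append (S.isPath_path m c _) fun _ hva hvc => ?_
    exact S.eq_branch_of_mem_support (Ne.symm ham) (Ne.symm hcm) hac
      ((S.mem_support_path_swap ham).mpr hva) hvc
  · rcases (mem_support_append_iff _ _).mp hv with hva | hvc
    · exact S.eq_branch_of_mem_support ham (Ne.symm hka) (Ne.symm hkm) hva hvk
    · exact absurd hvk (S.notMem_support_of_mem_support _ _ (Ne.symm ham) (Ne.symm hkm)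
        (Ne.symm hac) (Ne.symm hkc) hvc)
  · rcases (mem_support_append_iff _ _).mp hv with hva | hvc
    · exact absurd hvk (S.notMem_support_of_mem_support _ _ hac hka.symm hcm.symm hkm.symm hva)
    · exact S.eq_branch_of_mem_support hcm (Ne.symm hkc) (Ne.symm hkm)
        ((S.mem_support_path_swap hcm).mp hvc) hvk

lemma exists_odd_cycle {k a c m : Fin 4} (hka : k ≠ a) (hkc : k ≠ c) (hkm : k ≠ m)
    (hac : a ≠ c) (ham : a ≠ m) (hcm : c ≠ m)
    (hodd : Odd ((S.path a c hac).length + (S.path c m hcm).length +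
      (S.path m a (Ne.symm ham)).length)) :
    ∃ w : H.Walk (S.branch k) (S.branch k), w.IsCycle ∧ Odd w.length ∧
      w.snd = (S.path k a hka).snd ∧ w.penultimate = (S.path k c hkc).snd := by
  have hends : ∀ M : H.Walk (S.branch a) (S.branch c),
      ((S.path k a hka).append (M.append (S.path c k (Ne.symm hkc)))).snd =
        (S.path k a hka).snd ∧
      ((S.path k a hka).append (M.append (S.path c k (Ne.symm hkc)))).penultimate =
        (S.path k c hkc).snd := fun M => by
    have hc := S.not_nil_path (Ne.symm hkc)
    refine ⟨snd_append_of_not_nil (S.not_nil_path hka) _, ?_⟩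
    rw [penultimate_append_of_not_nil _ fun h => hc (nil_append_iff.mp h).2,
      penultimate_append_of_not_nil _ hc, S.penultimate_path_swap]
  by_cases htri : Odd ((S.path k a hka).length + (S.path a c hac).length +
      (S.path c k (Ne.symm hkc)).length)
  · refine ⟨_, S.isCycle_triangle hka hkc hac, ?_, hends _⟩
    rwa [length_append, length_append, ← add_assoc]
  · refine ⟨_, S.isCycle_quadrilateral hka hkc hkm hac ham hcm, ?_, hends _⟩
    have := S.length_path_swap hcm
    have := S.length_path_swap ham
    simp only [length_append, Nat.odd_iff] at htri hodd ⊢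
    omega

lemma snd_iff_not_snd_of_directed {E : V → V → Prop} (hE : ∀ u v, ¬(E u v ∧ E v u))
    {k a c m : Fin 4}
    (hdir : ∀ w : H.Walk (S.branch k) (S.branch k), w.IsCycle → Odd w.length →
      (∀ d ∈ w.darts, E d.toProd.1 d.toProd.2) ∨ (∀ d ∈ w.darts, E d.toProd.2 d.toProd.1))
    (hka : k ≠ a) (hkc : k ≠ c) (hkm : k ≠ m) (hac : a ≠ c) (ham : a ≠ m) (hcm : c ≠ m)
    (hodd : Odd ((S.path a c hac).length + (S.path c m hcm).length +
      (S.path m a (Ne.symm ham)).length)) :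
    E (S.path k a hka).snd (S.branch k) ↔ ¬E (S.path k c hkc).snd (S.branch k) := by
  obtain ⟨w, hw, hwodd, hsnd, hpen⟩ := S.exists_odd_cycle hka hkc hkm hac ham hcm hodd
  rw [← hsnd, ← hpen]
  exact snd_iff_not_penultimate_of_directed hE hw.not_nil (hdir w hw hwodd)

end K4Subdivision

theorem stmt10_general (V : Type) (H : SimpleGraph V)
    (hsub : IsK4Subdivision H) (hnb : ¬ H.Colorable 2)
    (E : V → V → Prop) (hor : IsOrientation H E) :
    ∃ (v : V) (w : H.Walk v v), w.IsCycle ∧ Odd w.length ∧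
      ¬ (∀ d ∈ w.darts, E d.toProd.1 d.toProd.2) ∧
      ¬ (∀ d ∈ w.darts, E d.toProd.2 d.toProd.1) := by
  by_contra hcon
  simp only [not_exists, not_and, not_not] at hcon
  obtain ⟨S⟩ := hsub.nonempty_k4Subdivision
  obtain ⟨i, j, l, hij, hjl, hli, hodd⟩ := S.exists_odd_triangle hnb
  obtain ⟨k, hki, hkj, hkl⟩ : ∃ k, k ≠ i ∧ k ≠ j ∧ k ≠ l :=
    (by decide : ∀ i j l : Fin 4, ∃ k, k ≠ i ∧ k ≠ j ∧ k ≠ l) i j l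
  have hdir := fun w hw hwodd => or_iff_not_imp_left.mpr (hcon (S.branch k) w hw hwodd)
  have hij' := S.snd_iff_not_snd_of_directed hor.2 hdir hki hkj hkl hij hli.symm hjl hodd
  have hjl' := S.snd_iff_not_snd_of_directed hor.2 hdir hkj hkl hki hjl hij.symm hli
    (by rwa [add_rotate] at hodd)
  have hli' := S.snd_iff_not_snd_of_directed hor.2 hdir hkl hki hkj hli hjl.symm hij
    (by rwa [add_rotate, add_rotate] at hodd)
  tauto

/-- If `H` is a non-bipartite subdivision of `K₄`, then every orientation of `H`
contains an inconsistent odd cycle: a cycle of odd length in the underlying graph whose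
edges do not all point consistently around the cycle (in either traversal direction),
so it is not a directed cycle. -/
theorem stmt10 (V : Type) [Fintype V] (H : SimpleGraph V)
    (hsub : IsK4Subdivision H) (hnb : ¬ H.Colorable 2)
    (E : V → V → Prop) (hor : IsOrientation H E) :
    ∃ (v : V) (w : H.Walk v v), w.IsCycle ∧ Odd w.length ∧
      ¬ (∀ d ∈ w.darts, E d.toProd.1 d.toProd.2) ∧
      ¬ (∀ d ∈ w.darts, E d.toProd.2 d.toProd.1) :=
  stmt10_general V H hsub hnb E hor
end

section
/- For every constant c < 1/2 the following holds: if G is a uniformly random tournament on n vertices (the direction of each edge is decided independently by a fair coin flip), then the probability that G has an acyclic subgraph with underlying chromatic number at least c·n/log₂ n tends to 1 as n tends to infinity. -/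
/-- The sample space for the random tournament on `n` vertices: one independent fair
coin flip for each pair `i < j`. -/
abbrev CoinFlips (n : ℕ) : Type := {p : Fin n × Fin n // p.1 < p.2} → Bool

/-- The tournament on `Fin n` determined by the coin flips `ω`: for `i < j`, the edge
between `i` and `j` points from `i` to `j` iff the coin for the pair `(i, j)` came up
`true`. -/
def tournOf {n : ℕ} (ω : CoinFlips n) : Fin n → Fin n → Prop :=
  fun i j => (∃ h : i < j, ω ⟨(i, j), h⟩ = true) ∨ ∃ h : j < i, ω ⟨(j, i), h⟩ = false

/-!
Keep only the forward edges `i → j` with `i < j`: they form an acyclic subgraph whose underlying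
graph is the binomial random graph `G(n, 1/2)`. Fix `a > 1` with `2ac < 1` and
`k = ⌊2a log₂ n⌋ + 1`. If `G(n, 1/2)` has no independent `k`-set, every colour class has fewer
than `k` vertices, so `χ ≥ n / (k - 1) > c n / log₂ n`. By the union bound over `k`-sets, an
independent `k`-set exists with probability at most
`C(n, k) 2^(-C(k, 2)) ≤ 2^(1/2 - (a - 1) log₂ n) → 0`.
-/

open Finset Filter
open scoped Topology

lemma isAcyclicRel_of_lt {V : Type*} [Preorder V] {E : V → V → Prop}
    (hE : ∀ u v, E u v → u < v) : IsAcyclicRel E := fun v hv => by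
  have hlt := Relation.TransGen.mono hE v v hv
  rw [Relation.transGen_eq_self] at hlt
  exact lt_irrefl v hlt

namespace SimpleGraph

variable {V : Type*} {G : SimpleGraph V}

lemma IndepSetFree.indepNum_lt [Finite V] {k : ℕ} (hG : G.IndepSetFree k) : G.indepNum < k := by
  by_contra! hk
  obtain ⟨s, hs⟩ := G.exists_isNIndepSet_indepNum
  obtain ⟨t, hts, htk⟩ := exists_subset_card_eq (hs.card_eq ▸ hk)
  exact hG t ⟨hs.isIndepSet.mono (by exact_mod_cast hts), htk⟩

lemma Coloring.card_le_mul_indepNum [Fintype V] {α : Type*} [Fintype α] (C : G.Coloring α) :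
    Fintype.card V ≤ Fintype.card α * G.indepNum := by
  classical
  calc Fintype.card V = ∑ a, #{v | C v = a} :=
        card_eq_sum_card_fiberwise fun v _ => mem_univ (C v)
    _ ≤ ∑ _a : α, G.indepNum := sum_le_sum fun a _ => IsIndepSet.card_le_indepNum
        fun u hu v hv _ hadj => C.valid hadj ((mem_filter.1 hu).2.trans (mem_filter.1 hv).2.symm)
    _ = Fintype.card α * G.indepNum := by simp

lemma le_chromaticNumber_of_mul_indepNum_lt [Fintype V] {t : ℕ}
    (h : (t - 1) * G.indepNum < Fintype.card V) : (t : ℕ∞) ≤ G.chromaticNumber := by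
  refine le_chromaticNumber_iff_coloring.2 fun m C => ?_
  have hcard := C.card_le_mul_indepNum
  rw [Fintype.card_fin] at hcard
  by_contra! hm
  exact (hcard.trans (Nat.mul_le_mul_right _ (by omega))).not_gt h

lemma IndepSetFree.le_chromaticNumber [Fintype V] {k t : ℕ} (hG : G.IndepSetFree k)
    (h : (t - 1) * (k - 1) < Fintype.card V) : (t : ℕ∞) ≤ G.chromaticNumber :=
  le_chromaticNumber_of_mul_indepNum_lt <|
    (Nat.mul_le_mul_left _ (Nat.le_sub_one_of_lt hG.indepNum_lt)).trans_lt h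

end SimpleGraph

lemma card_filter_forall_eq_false_mul {ι : Type*} [Fintype ι] [DecidableEq ι] (A : Finset ι) :
    #{f : ι → Bool | ∀ i ∈ A, f i = false} * 2 ^ #A = 2 ^ Fintype.card ι := by
  have hpi : ({f : ι → Bool | ∀ i ∈ A, f i = false} : Finset _) =
      Fintype.piFinset fun i => if i ∈ A then {false} else univ := by
    ext f
    simp only [mem_filter, mem_univ, true_and, Fintype.mem_piFinset]
    refine forall_congr' fun i => ?_
    split_ifs with hi <;> simp [hi]
  simp only [hpi, Fintype.card_piFinset, apply_ite card, card_singleton, card_univ,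
    Fintype.card_bool, prod_ite, prod_const_one, prod_const, one_mul, ← pow_add]
  rw [← compl_filter, filter_mem_eq_inter, univ_inter, card_compl_add_card]

section RandomTournament

variable {n : ℕ}

def forwardRel (ω : CoinFlips n) (u v : Fin n) : Prop :=
  ∃ h : u < v, ω ⟨(u, v), h⟩ = true

lemma forwardRel_le_tournOf (ω : CoinFlips n) (u v : Fin n) (h : forwardRel ω u v) :
    tournOf ω u v :=
  Or.inl h

lemma isAcyclicRel_forwardRel (ω : CoinFlips n) : IsAcyclicRel (forwardRel ω) :=
  isAcyclicRel_of_lt fun _ _ h => h.1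

def forwardGraph (ω : CoinFlips n) : SimpleGraph (Fin n) :=
  SimpleGraph.fromRel (forwardRel ω)

lemma card_pairs (n : ℕ) : Fintype.card {p : Fin n × Fin n // p.1 < p.2} = n.choose 2 := by
  rw [Fintype.card_subtype, ← univ_product_univ, card_product_filter_lt, card_univ,
    Fintype.card_fin]

lemma card_coinFlips (n : ℕ) : Nat.card (CoinFlips n) = 2 ^ n.choose 2 := by
  rw [Nat.card_eq_fintype_card, Fintype.card_fun, card_pairs, Fintype.card_bool]

def pairsIn (S : Finset (Fin n)) : Finset {p : Fin n × Fin n // p.1 < p.2} :=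
  (S ×ˢ S).subtype fun p => p.1 < p.2

lemma card_pairsIn (S : Finset (Fin n)) : #(pairsIn S) = (#S).choose 2 := by
  rw [pairsIn, card_subtype, card_product_filter_lt]

def allFalseOn (S : Finset (Fin n)) : Finset (CoinFlips n) :=
  {ω | ∀ p ∈ pairsIn S, ω p = false}

lemma card_allFalseOn_mul (S : Finset (Fin n)) :
    #(allFalseOn S) * 2 ^ (#S).choose 2 = 2 ^ n.choose 2 := by
  rw [allFalseOn, ← card_pairsIn, card_filter_forall_eq_false_mul, card_pairs]

lemma mem_allFalseOn_of_isIndepSet {ω : CoinFlips n} {S : Finset (Fin n)}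
    (hS : (forwardGraph ω).IsIndepSet S) : ω ∈ allFalseOn S := by
  refine mem_filter.2 ⟨mem_univ ω, ?_⟩
  rintro ⟨⟨u, v⟩, huv⟩ hp
  simp only [pairsIn, mem_subtype, mem_product] at hp
  by_contra hω
  exact hS hp.1 hp.2 huv.ne
    ((SimpleGraph.fromRel_adj _ _ _).2 ⟨huv.ne, .inl ⟨huv, by simpa using hω⟩⟩)

lemma natCard_not_indepSetFree_mul_le (k : ℕ) :
    Nat.card {ω : CoinFlips n // ¬ (forwardGraph ω).IndepSetFree k} *
      2 ^ k.choose 2 ≤ n.choose k * 2 ^ n.choose 2 := by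
  classical
  have hsub : ({ω | ¬ (forwardGraph ω).IndepSetFree k} : Finset (CoinFlips n)) ⊆
      (univ.powersetCard k).biUnion allFalseOn := by
    intro ω hω
    obtain ⟨S, hS⟩ : ∃ S, (forwardGraph ω).IsNIndepSet k S := by
      simpa [SimpleGraph.IndepSetFree] using hω
    exact mem_biUnion.2 ⟨S, mem_powersetCard.2 ⟨subset_univ S, hS.card_eq⟩,
      mem_allFalseOn_of_isIndepSet hS.isIndepSet⟩
  calc Nat.card {ω : CoinFlips n // ¬ (forwardGraph ω).IndepSetFree k} * 2 ^ k.choose 2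
      ≤ (∑ S ∈ univ.powersetCard k, #(allFalseOn S)) * 2 ^ k.choose 2 := by
        rw [Nat.card_eq_fintype_card, Fintype.card_subtype]
        exact Nat.mul_le_mul_right _ ((card_le_card hsub).trans card_biUnion_le)
    _ = ∑ _S ∈ univ.powersetCard k, 2 ^ n.choose 2 := by
        rw [sum_mul]
        exact sum_congr rfl fun S hS => (mem_powersetCard.1 hS).2 ▸ card_allFalseOn_mul S
    _ = n.choose k * 2 ^ n.choose 2 := by simp

def HasAcyclicSubgraphChromaticAtLeast (ω : CoinFlips n) (t : ℕ) : Prop :=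
  ∃ E' : Fin n → Fin n → Prop, (∀ u v, E' u v → tournOf ω u v) ∧ IsAcyclicRel E' ∧
    (t : ℕ∞) ≤ (SimpleGraph.fromRel E').chromaticNumber

lemma hasAcyclicSubgraphChromaticAtLeast_of_indepSetFree {k t : ℕ} {ω : CoinFlips n}
    (hω : (forwardGraph ω).IndepSetFree k) (hkt : (t - 1) * (k - 1) < n) :
    HasAcyclicSubgraphChromaticAtLeast ω t :=
  ⟨forwardRel ω, forwardRel_le_tournOf ω, isAcyclicRel_forwardRel ω,
    hω.le_chromaticNumber (by rwa [Fintype.card_fin])⟩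

lemma one_sub_choose_div_le_card_div {k t : ℕ} (hkt : (t - 1) * (k - 1) < n) :
    1 - (n.choose k : ℝ) / 2 ^ k.choose 2 ≤
      (Nat.card {ω : CoinFlips n // HasAcyclicSubgraphChromaticAtLeast ω t} : ℝ) /
        Nat.card (CoinFlips n) := by
  set good := Nat.card {ω : CoinFlips n // HasAcyclicSubgraphChromaticAtLeast ω t}
  set bad := Nat.card {ω : CoinFlips n // ¬ (forwardGraph ω).IndepSetFree k}
  have hcover : Nat.card (CoinFlips n) ≤ good + bad := by
    classical
    have hcases (ω : CoinFlips n) : HasAcyclicSubgraphChromaticAtLeast ω t ∨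
        ¬ (forwardGraph ω).IndepSetFree k :=
      or_iff_not_imp_right.2 fun hω =>
        hasAcyclicSubgraphChromaticAtLeast_of_indepSetFree (not_not.1 hω) hkt
    simp only [good, bad, Nat.card_eq_fintype_card]
    rw [← Fintype.card_congr (Equiv.subtypeUnivEquiv hcases)]
    exact Fintype.card_subtype_or _ _
  have hbad : (bad : ℝ) ≤ n.choose k / 2 ^ k.choose 2 * 2 ^ n.choose 2 := by
    rw [div_mul_eq_mul_div, le_div_iff₀ (by positivity)]
    exact_mod_cast natCard_not_indepSetFree_mul_le k
  have hN : (Nat.card (CoinFlips n) : ℝ) = 2 ^ n.choose 2 := by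
    rw [card_coinFlips, Nat.cast_pow, Nat.cast_two]
  have hcover' : (Nat.card (CoinFlips n) : ℝ) ≤ good + bad := by exact_mod_cast hcover
  rw [hN] at hcover' ⊢
  rw [le_div_iff₀ (by positivity), sub_mul, one_mul]
  linarith

end RandomTournament

lemma choose_div_two_pow_choose_two_le {n k : ℕ} {a : ℝ} (hn : 0 < n) (hk : 1 ≤ k)
    (hka : 2 * a * Real.logb 2 n ≤ k) (ha : 1 / 2 ≤ (a - 1) * Real.logb 2 n) :
    (n.choose k : ℝ) / 2 ^ k.choose 2 ≤ 2 ^ (1 / 2 - (a - 1) * Real.logb 2 n) := by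
  set L := Real.logb 2 n
  have hnL : (n : ℝ) = 2 ^ L := (Real.rpow_logb two_pos (by norm_num) (by positivity)).symm
  have hk' : (1 : ℝ) ≤ k := by exact_mod_cast hk
  -- `k (L - (k - 1) / 2) ≤ k (1 / 2 - (a - 1) L)`, and the bracket is `≤ 0` while `k ≥ 1`.
  have hexp : k * L - k * (k - 1) / 2 ≤ 1 / 2 - (a - 1) * L := by nlinarith
  calc (n.choose k : ℝ) / 2 ^ k.choose 2 ≤ (n : ℝ) ^ k / 2 ^ k.choose 2 := by
        gcongr; exact_mod_cast Nat.choose_le_pow n k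
    _ = (2 : ℝ) ^ (k * L - k * (k - 1) / 2) := by
        rw [Real.rpow_sub two_pos, ← Nat.cast_choose_two, Real.rpow_natCast, hnL,
          ← Real.rpow_natCast, ← Real.rpow_mul zero_le_two, mul_comm]
    _ ≤ 2 ^ (1 / 2 - (a - 1) * L) := Real.rpow_le_rpow_of_exponent_le one_le_two hexp

lemma ceil_sub_one_mul_floor_lt {c a L : ℝ} {n : ℕ} (hn : 0 < n) (hL : 0 < L) (ha : 0 < a)
    (hac : 2 * a * c < 1) : (⌈c * n / L⌉₊ - 1) * ⌊2 * a * L⌋₊ < n := by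
  rcases le_or_gt c 0 with hc | hc
  · have hceil : ⌈c * n / L⌉₊ = 0 := Nat.ceil_eq_zero.2 <|
      div_nonpos_of_nonpos_of_nonneg (mul_nonpos_of_nonpos_of_nonneg hc n.cast_nonneg) hL.le
    simpa [hceil] using hn
  · have hceil : ((⌈c * n / L⌉₊ - 1 : ℕ) : ℝ) ≤ c * n / L := by
      have hlt := Nat.ceil_lt_add_one (by positivity : 0 ≤ c * n / L)
      rw [Nat.cast_sub (Nat.ceil_pos.2 (by positivity)), Nat.cast_one]
      linarith
    have hprod : ((⌈c * n / L⌉₊ - 1 : ℕ) : ℝ) * ⌊2 * a * L⌋₊ < n := by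
      calc ((⌈c * n / L⌉₊ - 1 : ℕ) : ℝ) * ⌊2 * a * L⌋₊
          ≤ c * n / L * (2 * a * L) := by
            gcongr
            exact Nat.floor_le (by positivity)
        _ = 2 * a * c * n := by field_simp
        _ < n := by nlinarith [(Nat.cast_pos.2 hn : (0 : ℝ) < n)]
    exact_mod_cast hprod

lemma exists_one_lt_two_mul_mul_lt_one {c : ℝ} (hc : c < 1 / 2) :
    ∃ a : ℝ, 1 < a ∧ 2 * a * c < 1 := by
  rcases le_or_gt c 0 with hc0 | hc0
  · exact ⟨2, one_lt_two, by nlinarith⟩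
  · refine ⟨(1 + 1 / (2 * c)) / 2, ?_, ?_⟩
    · have : 1 < 1 / (2 * c) := by rw [lt_div_iff₀ (by positivity)]; linarith
      linarith
    · field_simp
      linarith

lemma one_sub_two_rpow_le_card_div {c a : ℝ} (ha : 1 < a) (hac : 2 * a * c < 1) {n : ℕ}
    (hn : 0 < n) (hL : 1 / 2 ≤ (a - 1) * Real.logb 2 n) :
    1 - (2 : ℝ) ^ (1 / 2 - (a - 1) * Real.logb 2 n) ≤
      (Nat.card {ω : CoinFlips n //
        HasAcyclicSubgraphChromaticAtLeast ω ⌈c * n / Real.logb 2 n⌉₊} : ℝ) /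
        Nat.card (CoinFlips n) := by
  set k := ⌊2 * a * Real.logb 2 n⌋₊ + 1
  have hLpos : 0 < Real.logb 2 n := by nlinarith
  have hk : 2 * a * Real.logb 2 n ≤ k := by exact_mod_cast (Nat.lt_floor_add_one _).le
  calc 1 - (2 : ℝ) ^ (1 / 2 - (a - 1) * Real.logb 2 n)
      ≤ 1 - (n.choose k : ℝ) / 2 ^ k.choose 2 := by
        gcongr
        exact choose_div_two_pow_choose_two_le hn le_add_self hk hL
    _ ≤ _ := one_sub_choose_div_le_card_div (by
        simpa [k] using ceil_sub_one_mul_floor_lt hn hLpos (by linarith) hac)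

lemma tendsto_one_sub_two_rpow {b : ℝ} (hb : 0 < b) :
    Tendsto (fun n : ℕ => 1 - (2 : ℝ) ^ (1 / 2 - b * Real.logb 2 n)) atTop (𝓝 1) := by
  have hexp : Tendsto (fun n : ℕ => 1 / 2 - b * Real.logb 2 n) atTop atBot :=
    tendsto_atBot_add_const_left _ _ <| tendsto_neg_atTop_atBot.comp <|
      ((Real.tendsto_logb_atTop one_lt_two).comp tendsto_natCast_atTop_atTop).const_mul_atTop hb
  simpa using tendsto_const_nhds.sub ((tendsto_rpow_atBot_of_base_gt_one 2 one_lt_two).comp hexp)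

/-- For every constant `c < 1/2`: the probability (i.e. the fraction of outcomes of the
uniform coin flips) that the random tournament on `n` vertices has an acyclic subgraph
with underlying chromatic number at least `c·n / log₂ n` tends to `1` as `n → ∞`. -/
theorem stmt13 (c : ℝ) (hc : c < 1 / 2) :
    Filter.Tendsto
      (fun n : ℕ =>
        (Nat.card {ω : CoinFlips n //
            ∃ E' : Fin n → Fin n → Prop,
              (∀ u v, E' u v → tournOf ω u v) ∧ IsAcyclicRel E' ∧
              (⌈c * n / Real.logb 2 n⌉₊ : ℕ∞) ≤
                (SimpleGraph.fromRel E').chromaticNumber} : ℝ) /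
          (Nat.card (CoinFlips n) : ℝ))
      Filter.atTop (nhds 1) := by
  obtain ⟨a, ha, hac⟩ := exists_one_lt_two_mul_mul_lt_one hc
  have hlog := (Real.tendsto_logb_atTop one_lt_two).comp tendsto_natCast_atTop_atTop
  refine tendsto_of_tendsto_of_tendsto_of_le_of_le' (tendsto_one_sub_two_rpow (sub_pos.2 ha))
    tendsto_const_nhds ?_ (Eventually.of_forall fun n =>
      div_le_one_of_le₀ (mod_cast Finite.card_subtype_le _) (Nat.cast_nonneg _))
  filter_upwards [eventually_gt_atTop 0, hlog.eventually_ge_atTop (1 / 2 / (a - 1))]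
    with n hn hL
  rw [div_le_iff₀ (sub_pos.2 ha), mul_comm] at hL
  exact one_sub_two_rpow_le_card_div ha hac hn hL
end
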